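/- arXiv:2506.17031 — 7 statements merged into one kernel-verified Lean document; each statement's English description precedes it below -/
import Mathlib

section
/- Let X be a finite set of reals and α : X → ℝ>0. For N ≥ 1 define ‖α‖²_{2,N} = ∑_{x₁,x₂∈X, |x₁-x₂|≤1/N} α(x₁)α(x₂). Then for any 1 ≤ N ≤ M, ‖α‖²_{2,N} ≪ (M/N)·‖α‖²_{2,M}, i.e. there is an absolute constant C with ‖α‖²_{2,N} ≤ C (M/N) ‖α‖²_{2,M}. -/
open Finset

/-- Monotonicity of the approximate `ℓ²` norm:
`‖α‖²_{2,N} ≤ C (M/N) ‖α‖²_{2,M}` for `1 ≤ N ≤ M`, with an absolute constant `C`. -/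
theorem stmt1 :
    ∃ C > (0 : ℝ), ∀ (X : Finset ℝ) (α : ℝ → ℝ), (∀ x ∈ X, 0 < α x) →
      ∀ N M : ℝ, 1 ≤ N → N ≤ M →
      (∑ x₁ ∈ X, ∑ x₂ ∈ X, if |x₁ - x₂| ≤ 1 / N then α x₁ * α x₂ else 0)
        ≤ C * (M / N) *
          (∑ x₁ ∈ X, ∑ x₂ ∈ X, if |x₁ - x₂| ≤ 1 / M then α x₁ * α x₂ else 0) := by
  refine ⟨5, by norm_num, ?_⟩
  intro X α hα N M hN hNM
  have hN0 : (0:ℝ) < N := lt_of_lt_of_le one_pos hN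
  have hM0 : (0:ℝ) < M := lt_of_lt_of_le hN0 hNM
  have hr1 : (1:ℝ) ≤ M / N := (one_le_div hN0).2 hNM
  set f : ℝ → ℤ := fun x => ⌊x * M⌋ with hf
  set K : ℤ := ⌊M / N⌋ + 1 with hKdef
  have hKfloor : (1:ℤ) ≤ ⌊M / N⌋ := by
    rw [Int.le_floor]; exact_mod_cast hr1
  have hαnn : ∀ x ∈ X, 0 ≤ α x := fun x hx => (hα x hx).le
  set A : ℤ → ℝ := fun k => ∑ x ∈ X.filter (fun x => f x = k), α x with hA
  have hAnn : ∀ k, 0 ≤ A k := fun k =>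
    Finset.sum_nonneg fun x hx => hαnn x (Finset.mem_filter.1 hx).1
  have hAzero : ∀ k, k ∉ X.image f → A k = 0 := by
    intro k hk
    apply Finset.sum_eq_zero
    intro x hx
    exact absurd (Finset.mem_image.2 ⟨x, (Finset.mem_filter.1 hx).1,
      (Finset.mem_filter.1 hx).2⟩) hk
  set T : ℤ → ℝ := fun j => ∑ x₁ ∈ X, ∑ x₂ ∈ X,
      if f x₂ - f x₁ = j then α x₁ * α x₂ else 0 with hT
  -- bucket representation of T j
  have hTA : ∀ j, T j = ∑ k ∈ X.image f, A k * A (j + k) := by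
    intro j
    have inner : ∀ x₁ ∈ X,
        (∑ x₂ ∈ X, if f x₂ - f x₁ = j then α x₁ * α x₂ else 0)
          = α x₁ * A (j + f x₁) := by
      intro x₁ hx₁
      calc ∑ x₂ ∈ X, (if f x₂ - f x₁ = j then α x₁ * α x₂ else 0)
          = ∑ x₂ ∈ X, (if f x₂ = j + f x₁ then α x₁ * α x₂ else 0) := by
            refine Finset.sum_congr rfl fun x₂ _ => ?_
            refine if_congr ?_ rfl rfl
            omega
        _ = ∑ x₂ ∈ X.filter (fun x => f x = j + f x₁), α x₁ * α x₂ :=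
            (Finset.sum_filter _ _).symm
        _ = α x₁ * A (j + f x₁) := by rw [hA, Finset.mul_sum]
    calc T j = ∑ x₁ ∈ X, α x₁ * A (j + f x₁) := Finset.sum_congr rfl inner
      _ = ∑ k ∈ X.image f, ∑ x₁ ∈ X.filter (fun x => f x = k),
            α x₁ * A (j + f x₁) :=
          (Finset.sum_fiberwise_of_maps_to
            (fun x hx => Finset.mem_image_of_mem f hx) _).symm
      _ = ∑ k ∈ X.image f, A k * A (j + k) := by
          refine Finset.sum_congr rfl fun k hk => ?_
          rw [hA]
          simp only
          rw [Finset.sum_mul]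
          refine Finset.sum_congr rfl fun x hx => ?_
          rw [(Finset.mem_filter.1 hx).2]
  have hT0 : T 0 = ∑ k ∈ X.image f, A k * A k := by
    rw [hTA 0]
    refine Finset.sum_congr rfl fun k _ => by rw [zero_add]
  -- translated square sums are dominated by the full square sum
  have hsumsq : ∀ j : ℤ, ∑ k ∈ X.image f, A (j + k) * A (j + k)
      ≤ ∑ k ∈ X.image f, A k * A k := by
    intro j
    have hinj : ∀ a ∈ X.image f, ∀ b ∈ X.image f, j + a = j + b → a = b := by
      intro a _ b _ h; omega
    have himg := Finset.sum_image (s := X.image f) (g := fun k : ℤ => j + k)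
      (f := fun k => A k * A k) hinj
    rw [← himg]
    have h2 : ∑ k ∈ (X.image f).image (fun k => j + k), A k * A k
        ≤ ∑ k ∈ (X.image f).image (fun k => j + k) ∪ X.image f, A k * A k :=
      Finset.sum_le_sum_of_subset_of_nonneg Finset.subset_union_left
        (fun k _ _ => mul_nonneg (hAnn k) (hAnn k))
    have h3 : ∑ k ∈ (X.image f).image (fun k => j + k) ∪ X.image f, A k * A k
        = ∑ k ∈ X.image f, A k * A k := by
      refine (Finset.sum_subset Finset.subset_union_right ?_).symm
      intro k _ hk
      rw [hAzero k hk, mul_zero]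
    linarith
  have hTle : ∀ j, T j ≤ T 0 := by
    intro j
    rw [hTA j, hT0]
    calc ∑ k ∈ X.image f, A k * A (j + k)
        ≤ ∑ k ∈ X.image f, (A k * A k + A (j + k) * A (j + k)) / 2 := by
          refine Finset.sum_le_sum fun k _ => ?_
          nlinarith [sq_nonneg (A k - A (j + k))]
      _ = ((∑ k ∈ X.image f, A k * A k)
            + ∑ k ∈ X.image f, A (j + k) * A (j + k)) / 2 := by
          rw [← Finset.sum_add_distrib, Finset.sum_div]
      _ ≤ ∑ k ∈ X.image f, A k * A k := by linarith [hsumsq j]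
  -- integer bound helper
  have hint : ∀ z : ℤ, (z:ℝ) < M/N + 1 → z ≤ K := by
    intro z hz
    have : z - 1 ≤ ⌊M/N⌋ := Int.le_floor.2 (by push_cast; linarith)
    omega
  -- close pairs have close buckets
  have hfb : ∀ x₁ x₂ : ℝ, |x₁ - x₂| ≤ 1/N → f x₂ - f x₁ ∈ Finset.Icc (-K) K := by
    intro x₁ x₂ h
    have hab : |x₂ * M - x₁ * M| ≤ M / N := by
      rw [← sub_mul, abs_mul, abs_of_pos hM0, abs_sub_comm]
      calc |x₁ - x₂| * M ≤ (1/N) * M := mul_le_mul_of_nonneg_right h hM0.le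
        _ = M / N := by ring
    have habs := abs_le.1 hab
    have h1 : (⌊x₂ * M⌋ : ℝ) ≤ x₂ * M := Int.floor_le _
    have h2 : x₂ * M < ⌊x₂ * M⌋ + 1 := Int.lt_floor_add_one _
    have h3 : (⌊x₁ * M⌋ : ℝ) ≤ x₁ * M := Int.floor_le _
    have h4 : x₁ * M < ⌊x₁ * M⌋ + 1 := Int.lt_floor_add_one _
    simp only [Finset.mem_Icc, hf]
    constructor
    · have : ((⌊x₁*M⌋ - ⌊x₂*M⌋ : ℤ) : ℝ) < M/N + 1 := by push_cast; linarith
      have := hint _ this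
      omega
    · exact hint _ (by push_cast; linarith)
  -- step 1 : S_N ≤ ∑_{|j|≤K} T j
  have key1 : (∑ x₁ ∈ X, ∑ x₂ ∈ X, if |x₁ - x₂| ≤ 1 / N then α x₁ * α x₂ else 0)
      ≤ ∑ j ∈ Finset.Icc (-K) K, T j := by
    have swap : ∑ j ∈ Finset.Icc (-K) K, T j
        = ∑ x₁ ∈ X, ∑ x₂ ∈ X, ∑ j ∈ Finset.Icc (-K) K,
            (if f x₂ - f x₁ = j then α x₁ * α x₂ else 0) := by
      rw [hT]
      rw [Finset.sum_comm]
      exact Finset.sum_congr rfl fun x₁ _ => Finset.sum_comm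
    rw [swap]
    refine Finset.sum_le_sum fun x₁ hx₁ => Finset.sum_le_sum fun x₂ hx₂ => ?_
    have hrhs : ∑ j ∈ Finset.Icc (-K) K,
        (if f x₂ - f x₁ = j then α x₁ * α x₂ else 0)
        = if f x₂ - f x₁ ∈ Finset.Icc (-K) K then α x₁ * α x₂ else 0 :=
      Finset.sum_ite_eq (Finset.Icc (-K) K) (f x₂ - f x₁) (fun _ => α x₁ * α x₂)
    rw [hrhs]
    split_ifs with h1 h2
    · exact le_refl _
    · exact absurd (hfb x₁ x₂ h1) h2
    · exact mul_nonneg (hαnn _ hx₁) (hαnn _ hx₂)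
    · exact le_refl _
  -- step 2 : T 0 ≤ S_M
  have hQSM : T 0 ≤ ∑ x₁ ∈ X, ∑ x₂ ∈ X,
      if |x₁ - x₂| ≤ 1 / M then α x₁ * α x₂ else 0 := by
    refine Finset.sum_le_sum fun x₁ hx₁ => Finset.sum_le_sum fun x₂ hx₂ => ?_
    split_ifs with h1 h2
    · exact le_refl _
    · exfalso
      apply h2
      have heq : f x₂ = f x₁ := by omega
      have heqR : (⌊x₂*M⌋ : ℝ) = ⌊x₁*M⌋ := by exact_mod_cast heq
      have h1' : (⌊x₂ * M⌋ : ℝ) ≤ x₂ * M := Int.floor_le _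
      have h2' : x₂ * M < ⌊x₂ * M⌋ + 1 := Int.lt_floor_add_one _
      have h3' : (⌊x₁ * M⌋ : ℝ) ≤ x₁ * M := Int.floor_le _
      have h4' : x₁ * M < ⌊x₁ * M⌋ + 1 := Int.lt_floor_add_one _
      have habs : |x₁ - x₂| * M ≤ 1 := by
        rw [← abs_of_pos hM0, ← abs_mul, sub_mul]
        exact abs_le.2 ⟨by linarith, by linarith⟩
      exact (le_div_iff₀ hM0).2 habs
    · exact mul_nonneg (hαnn _ hx₁) (hαnn _ hx₂)
    · exact le_refl _
  have hT0nn : 0 ≤ T 0 := by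
    refine Finset.sum_nonneg fun x₁ hx₁ => Finset.sum_nonneg fun x₂ hx₂ => ?_
    split_ifs
    · exact mul_nonneg (hαnn _ hx₁) (hαnn _ hx₂)
    · exact le_refl _
  -- counting
  have hcard : (Finset.Icc (-K) K).card = (2*K+1).toNat := by
    rw [Int.card_Icc]; congr 1; omega
  have hsumT : ∑ j ∈ Finset.Icc (-K) K, T j ≤ ((2*K+1).toNat : ℝ) * T 0 := by
    calc ∑ j ∈ Finset.Icc (-K) K, T j
        ≤ ∑ _j ∈ Finset.Icc (-K) K, T 0 := Finset.sum_le_sum fun j _ => hTle j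
      _ = ((Finset.Icc (-K) K).card : ℝ) * T 0 := by
          rw [Finset.sum_const, nsmul_eq_mul]
      _ = ((2*K+1).toNat : ℝ) * T 0 := by rw [hcard]
  have hcoef : ((2*K+1).toNat : ℝ) ≤ 5 * (M/N) := by
    have h1 : ((2*K+1).toNat : ℤ) = 2*K+1 := Int.toNat_of_nonneg (by omega)
    have hfl : (⌊M/N⌋ : ℝ) ≤ M/N := Int.floor_le _
    have h2 : ((2*K+1).toNat : ℝ) = 2*(⌊M/N⌋:ℝ) + 3 := by
      have : ((2*K+1).toNat : ℝ) = ((2*K+1 : ℤ) : ℝ) := by exact_mod_cast h1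
      rw [this, hKdef]; push_cast; ring
    rw [h2]; linarith
  calc (∑ x₁ ∈ X, ∑ x₂ ∈ X, if |x₁ - x₂| ≤ 1 / N then α x₁ * α x₂ else 0)
      ≤ ∑ j ∈ Finset.Icc (-K) K, T j := key1
    _ ≤ ((2*K+1).toNat : ℝ) * T 0 := hsumT
    _ ≤ 5 * (M/N) * T 0 := mul_le_mul_of_nonneg_right hcoef hT0nn
    _ ≤ 5 * (M/N) * (∑ x₁ ∈ X, ∑ x₂ ∈ X,
          if |x₁ - x₂| ≤ 1 / M then α x₁ * α x₂ else 0) := by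
        apply mul_le_mul_of_nonneg_left hQSM
        positivity
end

section
/- Let (αₘ)_{m≤M} be complex numbers and (xₘ)_{m≤M} real numbers, and T ≥ 1. Then (1/T)∫_{-T}^{T} |∑_{m≤M} αₘ e(xₘ t)|² dt ≪ ∑_{m₁,m₂≤M, 2T|x_{m₁}-x_{m₂}|≤1} |α_{m₁} α_{m₂}|, with an absolute implied constant; here e(x) = exp(2πix). -/
/-! The Fejér kernel `K(t) = δ² sinc(πδt)²` with `δ = 1/(2T)` is nonnegative, at least `4δ²/π²`
on `[-T, T]`, and its inverse Fourier transform is the tent `max 0 (δ - |ξ|)`, which vanishes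
outside `[-δ, δ]` and is at most `δ`. Hence `∫_{-T}^{T} |S|² ≤ π²/(4δ²) ∫ K |S|²`, and expanding
`|S|²` turns `∫ K |S|²` into `∑ αₘ₁ conj(αₘ₂) tent(xₘ₁ - xₘ₂)`, in which only the pairs with
`|xₘ₁ - xₘ₂| ≤ δ` survive, each with weight at most `δ`. -/

open Finset intervalIntegral
open MeasureTheory FourierTransform ComplexConjugate
open scoped Real

noncomputable section

def fejerKernel (δ t : ℝ) : ℝ := δ ^ 2 * Real.sinc (π * δ * t) ^ 2

def tent (δ ξ : ℝ) : ℝ := max 0 (δ - |ξ|)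

def expSum {ι : Type*} (s : Finset ι) (α : ι → ℂ) (x : ι → ℝ) (t : ℝ) : ℂ :=
  ∑ m ∈ s, α m * 𝐞 (x m * t)

end

lemma Real.sinc_sq_le_inv_sq {x : ℝ} (hx : x ≠ 0) : Real.sinc x ^ 2 ≤ (x ^ 2)⁻¹ := by
  rw [Real.sinc_of_ne_zero hx, div_pow, div_eq_mul_inv]
  exact mul_le_of_le_one_left (by positivity) (Real.sin_sq_le_one x)

lemma Real.sinc_abs (x : ℝ) : Real.sinc |x| = Real.sinc x := by
  rcases abs_cases x with ⟨h, -⟩ | ⟨h, -⟩ <;> simp [h, Real.sinc_neg]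

lemma Real.two_div_pi_le_sinc {x : ℝ} (hx : |x| ≤ π / 2) : 2 / π ≤ Real.sinc x := by
  rcases eq_or_ne x 0 with rfl | hx0
  · rw [Real.sinc_zero, div_le_one Real.pi_pos]; linarith [Real.pi_gt_three]
  rw [← Real.sinc_abs, Real.sinc_of_ne_zero (abs_ne_zero.mpr hx0),
    le_div_iff₀ (abs_pos.mpr hx0)]
  exact Real.mul_le_sin (abs_nonneg x) hx

section Fejer

variable {δ t : ℝ}

lemma fejerKernel_nonneg (δ t : ℝ) : 0 ≤ fejerKernel δ t := by
  unfold fejerKernel; positivity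

lemma continuous_fejerKernel (δ : ℝ) : Continuous (fejerKernel δ) := by
  unfold fejerKernel; fun_prop

lemma fejerKernel_le_sq (δ t : ℝ) : fejerKernel δ t ≤ δ ^ 2 := by
  refine mul_le_of_le_one_right (sq_nonneg δ) ?_
  exact (sq_le_one_iff_abs_le_one _).mpr (Real.abs_sinc_le_one _)

lemma fejerKernel_le_inv_sq (δ : ℝ) (ht : t ≠ 0) : fejerKernel δ t ≤ ((π * t) ^ 2)⁻¹ := by
  rcases eq_or_ne δ 0 with rfl | hδ
  · rw [fejerKernel, zero_pow two_ne_zero, zero_mul]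
    positivity
  calc fejerKernel δ t ≤ δ ^ 2 * ((π * δ * t) ^ 2)⁻¹ :=
        mul_le_mul_of_nonneg_left (Real.sinc_sq_le_inv_sq (by positivity)) (sq_nonneg δ)
    _ = ((π * t) ^ 2)⁻¹ := by field_simp

lemma integrable_fejerKernel (δ : ℝ) : Integrable (fejerKernel δ) := by
  refine ((integrable_inv_one_add_sq.const_mul (2 * (δ ^ 2 + 1))).mono'
    (continuous_fejerKernel δ).aestronglyMeasurable (.of_forall fun t => ?_))
  rw [Real.norm_of_nonneg (fejerKernel_nonneg δ t), ← div_eq_mul_inv,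
    le_div_iff₀ (by positivity)]
  rcases le_or_gt (t ^ 2) 1 with h | h
  · nlinarith [fejerKernel_le_sq δ t, fejerKernel_nonneg δ t, sq_nonneg t]
  · have ht : t ≠ 0 := by rintro rfl; norm_num at h
    have hπ : 1 ≤ π ^ 2 := by nlinarith [Real.pi_gt_three]
    have hk : fejerKernel δ t * t ^ 2 ≤ 1 :=
      calc fejerKernel δ t * t ^ 2 ≤ ((π * t) ^ 2)⁻¹ * (π * t) ^ 2 :=
            mul_le_mul (fejerKernel_le_inv_sq δ ht) (by rw [mul_pow]; nlinarith [sq_nonneg t])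
              (sq_nonneg t) (by positivity)
        _ = 1 := inv_mul_cancel₀ (by positivity)
    nlinarith [mul_nonneg (fejerKernel_nonneg δ t) (sub_nonneg.mpr h.le), sq_nonneg δ]

lemma four_div_pi_sq_mul_sq_le_fejerKernel (h : |δ * t| ≤ 1 / 2) :
    4 / π ^ 2 * δ ^ 2 ≤ fejerKernel δ t := by
  have hs : 2 / π ≤ Real.sinc (π * δ * t) := by
    apply Real.two_div_pi_le_sinc
    rw [mul_assoc, abs_mul, abs_of_pos Real.pi_pos]
    nlinarith [Real.pi_pos]
  unfold fejerKernel
  have : (2 / π) ^ 2 ≤ Real.sinc (π * δ * t) ^ 2 := pow_le_pow_left₀ (by positivity) hs 2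
  rw [div_pow] at this
  nlinarith [sq_nonneg δ]

end Fejer

section Tent

variable {δ ξ : ℝ}

lemma tent_nonneg (δ ξ : ℝ) : 0 ≤ tent δ ξ := le_max_left _ _

lemma tent_le (hδ : 0 ≤ δ) (ξ : ℝ) : tent δ ξ ≤ δ := max_le hδ (by linarith [abs_nonneg ξ])

lemma tent_eq_zero (h : δ ≤ |ξ|) : tent δ ξ = 0 := max_eq_left (by linarith)

lemma tent_neg (δ ξ : ℝ) : tent δ (-ξ) = tent δ ξ := by simp [tent]

lemma tent_of_mem_Icc (h : ξ ∈ Set.Icc 0 δ) : tent δ ξ = δ - ξ := by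
  rw [tent, abs_of_nonneg h.1, max_eq_right (by linarith [h.2])]

@[fun_prop]
lemma continuous_tent (δ : ℝ) : Continuous (tent δ) := by
  unfold tent; fun_prop

lemma integrable_tent (δ : ℝ) : Integrable (tent δ) := by
  refine (continuous_tent δ).integrable_of_hasCompactSupport
    (HasCompactSupport.intro (isCompact_Icc (a := -δ) (b := δ)) fun ξ hξ => tent_eq_zero ?_)
  rw [Set.mem_Icc, not_and_or, not_le, not_le] at hξ
  rcases hξ with h | h <;> cases abs_cases ξ <;> linarith

end Tent

lemma fourierChar_add_fourierChar_neg (y : ℝ) :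
    (𝐞 y : ℂ) + 𝐞 (-y) = (2 * Real.cos (2 * π * y) : ℝ) := by
  rw [Real.fourierChar_apply, Real.fourierChar_apply]
  push_cast
  rw [Complex.two_cos]
  ring_nf

lemma integral_sub_mul_cos (δ : ℝ) {a : ℝ} (ha : a ≠ 0) :
    ∫ u in (0)..δ, (δ - u) * Real.cos (a * u) = (1 - Real.cos (a * δ)) / a ^ 2 := by
  have hderiv : ∀ u, HasDerivAt
      (fun u => (δ - u) * Real.sin (a * u) / a - Real.cos (a * u) / a ^ 2)
      ((δ - u) * Real.cos (a * u)) u := by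
    intro u
    have hlin : HasDerivAt (fun u => a * u) a u := by
      simpa using (hasDerivAt_id' u).const_mul a
    refine ((((hasDerivAt_id' u).const_sub δ).mul hlin.sin).div_const a |>.sub
      (hlin.cos.div_const (a ^ 2))).congr_deriv ?_
    field_simp
    ring
  rw [integral_eq_sub_of_hasDerivAt (fun u _ => hderiv u)
    ((by fun_prop : Continuous _).intervalIntegrable _ _)]
  simp only [sub_self, zero_mul, zero_div, zero_sub, sub_zero, mul_zero, Real.sin_zero,
    Real.cos_zero, one_div, sub_neg_eq_add]
  ring

lemma fourier_tent {δ : ℝ} (hδ : 0 < δ) (t : ℝ) :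
    𝓕 (fun ξ => (tent δ ξ : ℂ)) t = fejerKernel δ t := by
  set g : ℝ → ℂ := fun u => 𝐞 (-(u * t)) * (tent δ u : ℂ)
  have hg : Continuous g := by fun_prop
  have hsupp : 𝓕 (fun ξ => (tent δ ξ : ℂ)) t = ∫ u in -δ..δ, g u := by
    have hzero : ∀ u ∉ Set.Ioc (-δ) δ, g u = 0 := fun u hu => by
      rw [Set.mem_Ioc, not_and_or, not_lt, not_le] at hu
      simp only [g, tent_eq_zero (by rcases hu with h | h <;> cases abs_cases u <;> linarith :
        δ ≤ |u|), Complex.ofReal_zero, mul_zero]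
    rw [integral_of_le (by linarith), setIntegral_eq_integral_of_forall_compl_eq_zero hzero,
      Real.fourier_real_eq]
    rfl
  have hsym : ∫ u in -δ..δ, g u =
      ∫ u in 0..δ, ((2 * ((δ - u) * Real.cos (2 * π * t * u)) : ℝ) : ℂ) := by
    rw [← integral_add_adjacent_intervals (b := 0) (hg.intervalIntegrable _ _)
      (hg.intervalIntegrable _ _), ← neg_zero, ← integral_comp_neg, neg_zero,
      ← integral_add (f := fun u => g (-u)) ((hg.comp continuous_neg).intervalIntegrable _ _)
        (hg.intervalIntegrable _ _)]
    refine integral_congr fun u hu => ?_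
    rw [Set.uIcc_of_le hδ.le] at hu
    simp only [g, tent_neg, neg_mul, neg_neg, tent_of_mem_Icc hu]
    rw [← add_mul, fourierChar_add_fourierChar_neg]
    push_cast
    ring_nf
  rw [hsupp, hsym, intervalIntegral.integral_ofReal, Complex.ofReal_inj,
    intervalIntegral.integral_const_mul]
  rcases eq_or_ne t 0 with rfl | ht
  · simp only [mul_zero, zero_mul, Real.cos_zero, mul_one]
    rw [integral_sub intervalIntegrable_const intervalIntegral.intervalIntegrable_id,
      intervalIntegral.integral_const, integral_id, smul_eq_mul, fejerKernel, mul_zero,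
      Real.sinc_zero]
    ring
  · have hx : π * δ * t ≠ 0 := by positivity
    rw [integral_sub_mul_cos δ (by positivity), fejerKernel, Real.sinc_of_ne_zero hx, div_pow,
      Real.sin_sq_eq_half_sub]
    field_simp

lemma fourierInv_fejerKernel {δ : ℝ} (hδ : 0 < δ) :
    𝓕⁻ (fun t => (fejerKernel δ t : ℂ)) = fun ξ => (tent δ ξ : ℂ) := by
  have h : 𝓕 (fun ξ => (tent δ ξ : ℂ)) = fun t => (fejerKernel δ t : ℂ) :=
    funext (fourier_tent hδ)
  rw [← h]
  exact Continuous.fourierInv_fourier_eq (by fun_prop) (integrable_tent δ).ofReal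
    (h ▸ (integrable_fejerKernel δ).ofReal)

section ExpSum

variable {ι : Type*} (s : Finset ι) (α : ι → ℂ) (x : ι → ℝ)

@[fun_prop]
lemma continuous_expSum : Continuous (expSum s α x) := by
  unfold expSum; fun_prop

lemma norm_expSum_le (t : ℝ) : ‖expSum s α x t‖ ≤ ∑ m ∈ s, ‖α m‖ :=
  (norm_sum_le _ _).trans_eq (by simp [Circle.norm_coe])

lemma norm_expSum_sq (t : ℝ) :
    ((‖expSum s α x t‖ ^ 2 : ℝ) : ℂ) =
      ∑ m₁ ∈ s, ∑ m₂ ∈ s, α m₁ * conj (α m₂) * 𝐞 ((x m₁ - x m₂) * t) := by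
  rw [Complex.ofReal_pow, ← Complex.mul_conj', expSum, map_sum, sum_mul_sum]
  refine sum_congr rfl fun m₁ _ => sum_congr rfl fun m₂ _ => ?_
  rw [show (x m₁ - x m₂) * t = x m₁ * t + -(x m₂ * t) by ring, AddChar.map_add_eq_mul,
    AddChar.map_neg_eq_inv, Circle.coe_mul, Circle.coe_inv_eq_conj, map_mul (starRingEnd ℂ)]
  ring

lemma integrable_mul_norm_expSum_sq {K : ℝ → ℝ} (hK : Integrable K) :
    Integrable fun t => K t * ‖expSum s α x t‖ ^ 2 :=
  hK.mul_bdd (by fun_prop) (.of_forall fun t => by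
    rw [norm_pow, norm_norm]
    exact pow_le_pow_left₀ (norm_nonneg _) (norm_expSum_le s α x t) 2)

lemma integral_mul_norm_expSum_sq {K : ℝ → ℝ} (hK : Integrable K) :
    ∫ t, K t * ‖expSum s α x t‖ ^ 2 =
      (∑ m₁ ∈ s, ∑ m₂ ∈ s, α m₁ * conj (α m₂) * 𝓕⁻ (fun t => (K t : ℂ)) (x m₁ - x m₂)).re := by
  have hint : ∀ θ : ℝ, Integrable fun t => 𝐞 (θ * t) • (K t : ℂ) := fun θ => by
    simpa using (Real.fourierIntegral_convergent_iff (-θ)).2 hK.ofReal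
  have hfourier : ∀ θ, 𝓕⁻ (fun t => (K t : ℂ)) θ = ∫ t, 𝐞 (θ * t) • (K t : ℂ) := fun θ => by
    simp [Real.fourierInv_eq]
  have hexpand : ∀ t, ((K t * ‖expSum s α x t‖ ^ 2 : ℝ) : ℂ) =
      ∑ m₁ ∈ s, ∑ m₂ ∈ s, α m₁ * conj (α m₂) * 𝐞 ((x m₁ - x m₂) * t) • (K t : ℂ) := fun t => by
    rw [Complex.ofReal_mul, norm_expSum_sq, mul_sum]
    refine sum_congr rfl fun m₁ _ => ?_
    rw [mul_sum]
    refine sum_congr rfl fun m₂ _ => ?_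
    rw [Circle.smul_def, smul_eq_mul]
    ring
  rw [← Complex.ofReal_re (∫ t, _), ← integral_complex_ofReal,
    integral_congr_ae (.of_forall hexpand),
    integral_finsetSum _ fun m₁ _ => integrable_finsetSum _ fun m₂ _ => (hint _).const_mul _]
  refine congrArg Complex.re (sum_congr rfl fun m₁ _ => ?_)
  rw [integral_finsetSum _ fun m₂ _ => (hint _).const_mul _]
  refine sum_congr rfl fun m₂ _ => ?_
  rw [MeasureTheory.integral_const_mul, hfourier]

end ExpSum

lemma mul_intervalIntegral_le_integral_mul {f K : ℝ → ℝ} {a b c : ℝ} (hab : a ≤ b)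
    (hf : IntervalIntegrable f volume a b) (hf0 : 0 ≤ f) (hK0 : 0 ≤ K)
    (hKf : Integrable fun t => K t * f t) (hcK : ∀ t ∈ Set.Icc a b, c ≤ K t) :
    c * ∫ t in a..b, f t ≤ ∫ t, K t * f t := by
  rw [← intervalIntegral.integral_const_mul]
  calc ∫ t in a..b, c * f t ≤ ∫ t in a..b, K t * f t :=
        integral_mono_on hab (hf.const_mul c) hKf.intervalIntegrable
          fun t ht => mul_le_mul_of_nonneg_right (hcK t ht) (hf0 t)
    _ = ∫ t in Set.Ioc a b, K t * f t := integral_of_le hab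
    _ ≤ ∫ t, K t * f t :=
        setIntegral_le_integral hKf (.of_forall fun t => mul_nonneg (hK0 t) (hf0 t))

lemma re_mul_tent_le {δ : ℝ} (hδ : 0 ≤ δ) (z : ℂ) (θ : ℝ) :
    (z * tent δ θ).re ≤ δ * if |θ| ≤ δ then ‖z‖ else 0 := by
  split_ifs with h
  · calc (z * tent δ θ).re ≤ ‖z * tent δ θ‖ := Complex.re_le_norm _
      _ = ‖z‖ * tent δ θ := by
          rw [norm_mul, Complex.norm_real, Real.norm_of_nonneg (tent_nonneg _ _)]
      _ ≤ δ * ‖z‖ := by nlinarith [tent_le hδ θ, norm_nonneg z]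
  · rw [tent_eq_zero (not_le.mp h).le]
    simp

lemma re_sum_mul_tent_le {ι : Type*} {δ : ℝ} (hδ : 0 ≤ δ) (s : Finset ι) (α : ι → ℂ)
    (x : ι → ℝ) :
    (∑ m₁ ∈ s, ∑ m₂ ∈ s, α m₁ * conj (α m₂) * (tent δ (x m₁ - x m₂) : ℂ)).re ≤
      δ * ∑ m₁ ∈ s, ∑ m₂ ∈ s, if |x m₁ - x m₂| ≤ δ then ‖α m₁ * α m₂‖ else 0 := by
  simp only [Complex.re_sum, mul_sum]
  refine sum_le_sum fun m₁ _ => sum_le_sum fun m₂ _ => ?_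
  simpa only [norm_mul, Complex.norm_conj] using re_mul_tent_le hδ (α m₁ * conj (α m₂)) _

/-- Mean value theorem for exponential sums, upper bound: the `L²` average over `[-T,T]`
of `∑ αₘ e(xₘ t)` is bounded by the weighted count of pairs of frequencies within
`1/(2T)` of each other, with an absolute constant. Here `e(x) = exp(2πix)`. -/
theorem stmt5 :
    ∃ C > (0 : ℝ), ∀ (M : ℕ) (α : ℕ → ℂ) (x : ℕ → ℝ) (T : ℝ), 1 ≤ T →
      (1 / T) * ∫ t in (-T)..T,
          ‖∑ m ∈ Finset.Icc 1 M,
            α m * Complex.exp (2 * (Real.pi : ℂ) * Complex.I * ((x m : ℂ) * (t : ℂ)))‖ ^ 2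
        ≤ C * ∑ m₁ ∈ Finset.Icc 1 M, ∑ m₂ ∈ Finset.Icc 1 M,
            if 2 * T * |x m₁ - x m₂| ≤ 1 then ‖α m₁ * α m₂‖ else 0 := by
  refine ⟨π ^ 2 / 2, by positivity, fun M α x T hT => ?_⟩
  have hT0 : 0 < T := by linarith
  set δ := 1 / (2 * T) with hδ_def
  have hδ : 0 < δ := by positivity
  have hexp : ∀ y : ℝ, Complex.exp (2 * π * Complex.I * y) = 𝐞 y := fun y => by
    rw [Real.fourierChar_apply]; push_cast; ring_nf
  have hcond : ∀ θ : ℝ, 2 * T * θ ≤ 1 ↔ θ ≤ δ := fun θ => by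
    rw [hδ_def, le_div_iff₀ (by positivity), mul_comm]
  simp only [← Complex.ofReal_mul, hexp, hcond]
  change (1 / T) * ∫ t in -T..T, ‖expSum (Icc 1 M) α x t‖ ^ 2 ≤ _
  have hmajor :=
    mul_intervalIntegral_le_integral_mul (f := fun t => ‖expSum (Icc 1 M) α x t‖ ^ 2)
    (neg_le_self hT0.le) (((continuous_expSum (Icc 1 M) α x).norm.pow 2).intervalIntegrable _ _)
    (fun t => sq_nonneg _) (fejerKernel_nonneg δ)
    (integrable_mul_norm_expSum_sq _ _ _ (integrable_fejerKernel δ))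
    (fun t ht => four_div_pi_sq_mul_sq_le_fejerKernel (by
      rw [abs_mul, abs_of_pos hδ, hδ_def, one_div_mul_eq_div, div_le_iff₀ (by positivity)]
      linarith [abs_le.mpr ht]))
  rw [integral_mul_norm_expSum_sq _ _ _ (integrable_fejerKernel δ),
    fourierInv_fejerKernel hδ] at hmajor
  have hsum := hmajor.trans (re_sum_mul_tent_le hδ.le (Icc 1 M) α x)
  set I := ∫ t in -T..T, ‖expSum (Icc 1 M) α x t‖ ^ 2
  calc (1 / T) * I = π ^ 2 * T * (4 / π ^ 2 * δ ^ 2 * I) := by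
        rw [hδ_def]; field_simp; ring
    _ ≤ π ^ 2 * T * (δ * _) := by gcongr
    _ = _ := by rw [hδ_def]; field_simp
end

section
/- Let X₁, X₂ be finite sets of positive reals, α a positive weight on X₁ ∪ X₂, β a sequence of complex numbers, N₁, N₂ ∈ ℕ, y ∈ ℝ, K ≥ 1. Define S̃(X, N, K) = ∑ over n₁, n₂ ∈ (N,2N], x₁, x₂ ∈ X with |n₁x₁ - n₂x₂| ≤ K of α(x₁)α(x₂)|β(n₁)β(n₂)|. Then |∑_{nᵢ∈(Nᵢ,2Nᵢ], xᵢ∈Xᵢ, |n₁x₁-n₂x₂-y|≤K} α(x₁)α(x₂)β(n₁)β(n₂)| ≪ S̃(X₁, N₁, 2K)^{1/2} · S̃(X₂, N₂, 2K)^{1/2}. -/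
open Finset

section key
variable {ι κ : Type*}

lemma key_step (s : Finset ι) (t : Finset κ) (f : ι → ℝ) (g : κ → ℝ)
    (hf : ∀ p ∈ s, 0 ≤ f p) (hg : ∀ q ∈ t, 0 ≤ g q)
    (j₁ : ι → ℤ) (j₂ : κ → ℤ) (δ : ℤ) :
    ∑ p ∈ s, ∑ q ∈ t, (if j₂ q = j₁ p + δ then f p * g q else 0)
      ≤ Real.sqrt (∑ p ∈ s, ∑ p' ∈ s, if j₁ p' = j₁ p then f p * f p' else 0)
        * Real.sqrt (∑ q ∈ t, ∑ q' ∈ t, if j₂ q' = j₂ q then g q * g q' else 0) := by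
  classical
  let A : ℤ → ℝ := fun m => ∑ p ∈ s, if j₁ p = m then f p else 0
  let B : ℤ → ℝ := fun m => ∑ q ∈ t, if j₂ q = m then g q else 0
  have hAfib : ∀ m, A m = ∑ p ∈ s.filter (fun p => j₁ p = m), f p := by
    intro m; simp only [A]; rw [Finset.sum_filter]
  have hBfib : ∀ m, B m = ∑ q ∈ t.filter (fun q => j₂ q = m), g q := by
    intro m; simp only [B]; rw [Finset.sum_filter]
  have hBz : ∀ m, m ∉ t.image j₂ → B m = 0 := by
    intro m hm
    apply Finset.sum_eq_zero
    intro q hq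
    have : j₂ q ≠ m := fun h => hm (h ▸ Finset.mem_image_of_mem j₂ hq)
    simp [this]
  have hT : ∑ p ∈ s, ∑ q ∈ t, (if j₂ q = j₁ p + δ then f p * g q else 0)
      = ∑ p ∈ s, f p * B (j₁ p + δ) := by
    refine Finset.sum_congr rfl fun p _ => ?_
    simp only [B, Finset.mul_sum]
    exact Finset.sum_congr rfl fun q _ => by split <;> simp
  have hgroup : ∀ (F : ℤ → ℝ), ∑ p ∈ s, f p * F (j₁ p)
      = ∑ m ∈ s.image j₁, A m * F m := by
    intro F
    rw [← Finset.sum_fiberwise_of_maps_to (fun p hp => Finset.mem_image_of_mem j₁ hp)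
      (fun p => f p * F (j₁ p))]
    refine Finset.sum_congr rfl fun m _ => ?_
    rw [hAfib, Finset.sum_mul]
    exact Finset.sum_congr rfl fun p hp => by rw [(Finset.mem_filter.mp hp).2]
  have hrow : ∀ (h : ι → ℝ) (j : ι → ℤ) (p : ι),
      (∑ p' ∈ s, if j p' = j p then h p * h p' else 0)
        = h p * ∑ p' ∈ s, (if j p' = j p then h p' else 0) := by
    intro h j p
    rw [Finset.mul_sum]
    exact Finset.sum_congr rfl fun q _ => by split <;> simp
  have hS1 : ∑ p ∈ s, ∑ p' ∈ s, (if j₁ p' = j₁ p then f p * f p' else 0)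
      = ∑ m ∈ s.image j₁, A m ^ 2 := by
    calc ∑ p ∈ s, ∑ p' ∈ s, (if j₁ p' = j₁ p then f p * f p' else 0)
        = ∑ p ∈ s, f p * A (j₁ p) := Finset.sum_congr rfl fun p _ => hrow f j₁ p
      _ = ∑ m ∈ s.image j₁, A m * A m := hgroup A
      _ = _ := Finset.sum_congr rfl fun m _ => (sq (A m)).symm
  have hS2 : ∑ q ∈ t, ∑ q' ∈ t, (if j₂ q' = j₂ q then g q * g q' else 0)
      = ∑ m ∈ t.image j₂, B m ^ 2 := by
    have h1 : ∀ q ∈ t, (∑ q' ∈ t, if j₂ q' = j₂ q then g q * g q' else 0)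
        = g q * B (j₂ q) := by
      intro q _
      rw [Finset.mul_sum]
      exact Finset.sum_congr rfl fun q' _ => by split <;> simp
    rw [Finset.sum_congr rfl h1,
      ← Finset.sum_fiberwise_of_maps_to (fun q hq => Finset.mem_image_of_mem j₂ hq)
      (fun q => g q * B (j₂ q))]
    refine Finset.sum_congr rfl fun m _ => ?_
    rw [sq, hBfib, Finset.sum_mul]
    exact Finset.sum_congr rfl fun q hq => by rw [(Finset.mem_filter.mp hq).2, hBfib]
  have hAnn : ∀ m, 0 ≤ A m := fun m => Finset.sum_nonneg fun p hp => by
    split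
    · exact hf p hp
    · exact le_refl 0
  have hBnn : ∀ m, 0 ≤ B m := fun m => Finset.sum_nonneg fun q hq => by
    split
    · exact hg q hq
    · exact le_refl 0
  have hshift : ∑ m ∈ s.image j₁, B (m + δ) ^ 2 ≤ ∑ m ∈ t.image j₂, B m ^ 2 := by
    have h1 : ∑ k ∈ (s.image j₁).image (· + δ), B k ^ 2
        = ∑ m ∈ s.image j₁, B (m + δ) ^ 2 :=
      Finset.sum_image (fun a _ b _ h => by simpa using h)
    rw [← h1, ← Finset.sum_inter_add_sum_sdiff ((s.image j₁).image (· + δ)) (t.image j₂)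
      (fun k => B k ^ 2)]
    have h2 : ∑ k ∈ ((s.image j₁).image (· + δ)) \ (t.image j₂), B k ^ 2 = 0 :=
      Finset.sum_eq_zero fun k hk => by
        rw [hBz k (Finset.mem_sdiff.mp hk).2]; ring
    rw [h2, add_zero]
    exact Finset.sum_le_sum_of_subset_of_nonneg (Finset.inter_subset_right)
      (fun k _ _ => sq_nonneg _)
  have hcs : (∑ m ∈ s.image j₁, A m * B (m + δ)) ^ 2
      ≤ (∑ m ∈ s.image j₁, A m ^ 2) * ∑ m ∈ t.image j₂, B m ^ 2 :=
    calc (∑ m ∈ s.image j₁, A m * B (m + δ)) ^ 2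
        ≤ (∑ m ∈ s.image j₁, A m ^ 2) * ∑ m ∈ s.image j₁, B (m + δ) ^ 2 :=
          Finset.sum_mul_sq_le_sq_mul_sq _ _ _
      _ ≤ _ := mul_le_mul_of_nonneg_left hshift
          (Finset.sum_nonneg fun m _ => sq_nonneg _)
  rw [hT, hgroup (fun m => B (m + δ)), hS1, hS2, ← Real.sqrt_mul
    (Finset.sum_nonneg fun m _ => sq_nonneg _)]
  exact Real.le_sqrt_of_sq_le hcs

end key

lemma floor_close {a b K : ℝ} (hK : 0 < K) (h : |a - b| ≤ K) :
    |⌊a / K⌋ - ⌊b / K⌋| ≤ 1 := by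
  rw [abs_le] at h
  have h1 : ⌊a / K⌋ ≤ ⌊b / K⌋ + 1 := by
    have h2 : a / K ≤ b / K + 1 := by
      have : a / K - b / K ≤ 1 := by
        rw [← sub_div, div_le_one hK]; linarith [h.2]
      linarith
    calc ⌊a / K⌋ ≤ ⌊b / K + 1⌋ := Int.floor_le_floor h2
      _ = ⌊b / K⌋ + 1 := Int.floor_add_one _
  have h3 : ⌊b / K⌋ ≤ ⌊a / K⌋ + 1 := by
    have h2 : b / K ≤ a / K + 1 := by
      have : b / K - a / K ≤ 1 := by
        rw [← sub_div, div_le_one hK]; linarith [h.1]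
      linarith
    calc ⌊b / K⌋ ≤ ⌊a / K + 1⌋ := Int.floor_le_floor h2
      _ = ⌊a / K⌋ + 1 := Int.floor_add_one _
  rw [abs_le]; omega

lemma floor_eq_close {a b K : ℝ} (hK : 0 < K) (h : ⌊a / K⌋ = ⌊b / K⌋) :
    |a - b| ≤ 2 * K := by
  have ha1 : ((⌊a / K⌋ : ℤ) : ℝ) ≤ a / K := Int.floor_le _
  have ha2 : a / K < ⌊a / K⌋ + 1 := Int.lt_floor_add_one _
  have hb1 : ((⌊b / K⌋ : ℤ) : ℝ) ≤ b / K := Int.floor_le _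
  have hb2 : b / K < ⌊b / K⌋ + 1 := Int.lt_floor_add_one _
  rw [h] at ha1 ha2
  have e1 : a / K * K = a := div_mul_cancel₀ a hK.ne'
  have e2 : b / K * K = b := div_mul_cancel₀ b hK.ne'
  rw [abs_le]
  constructor <;> nlinarith [ha1, ha2, hb1, hb2, hK]

lemma ite_abs_split (a b : ℤ) (x : ℝ) :
    (if |a - b| ≤ 1 then x else 0)
      = ∑ δ ∈ ({-1, 0, 1} : Finset ℤ), (if b = a + δ then x else 0) := by
  rw [show ({-1, 0, 1} : Finset ℤ) = insert (-1) (insert 0 {1}) from rfl,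
    Finset.sum_insert (by decide), Finset.sum_insert (by decide), Finset.sum_singleton]
  have habs : |a - b| ≤ 1 ↔ -1 ≤ a - b ∧ a - b ≤ 1 := abs_le
  split_ifs <;> first
    | ring
    | (exfalso; omega)
  all_goals (rw [habs] at *; omega)

lemma key (s : Finset ι) (t : Finset κ) (f : ι → ℝ) (g : κ → ℝ)
    (hf : ∀ p ∈ s, 0 ≤ f p) (hg : ∀ q ∈ t, 0 ≤ g q)
    (j₁ : ι → ℤ) (j₂ : κ → ℤ) :
    ∑ p ∈ s, ∑ q ∈ t, (if |j₁ p - j₂ q| ≤ 1 then f p * g q else 0)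
      ≤ 3 * (Real.sqrt (∑ p ∈ s, ∑ p' ∈ s, if j₁ p' = j₁ p then f p * f p' else 0)
        * Real.sqrt (∑ q ∈ t, ∑ q' ∈ t, if j₂ q' = j₂ q then g q * g q' else 0)) := by
  classical
  have e : ∑ p ∈ s, ∑ q ∈ t, (if |j₁ p - j₂ q| ≤ 1 then f p * g q else 0)
      = ∑ δ ∈ ({-1, 0, 1} : Finset ℤ), ∑ p ∈ s, ∑ q ∈ t,
          (if j₂ q = j₁ p + δ then f p * g q else 0) :=
    calc ∑ p ∈ s, ∑ q ∈ t, (if |j₁ p - j₂ q| ≤ 1 then f p * g q else 0)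
        = ∑ p ∈ s, ∑ q ∈ t, ∑ δ ∈ ({-1, 0, 1} : Finset ℤ),
            (if j₂ q = j₁ p + δ then f p * g q else 0) :=
          Finset.sum_congr rfl fun p _ => Finset.sum_congr rfl fun q _ =>
            ite_abs_split _ _ _
      _ = ∑ p ∈ s, ∑ δ ∈ ({-1, 0, 1} : Finset ℤ), ∑ q ∈ t,
            (if j₂ q = j₁ p + δ then f p * g q else 0) :=
          Finset.sum_congr rfl fun p _ => Finset.sum_comm
      _ = _ := Finset.sum_comm
  rw [e]
  have card3 : (({-1, 0, 1} : Finset ℤ)).card = 3 := rfl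
  calc ∑ δ ∈ ({-1, 0, 1} : Finset ℤ), ∑ p ∈ s, ∑ q ∈ t,
          (if j₂ q = j₁ p + δ then f p * g q else 0)
      ≤ ∑ _δ ∈ ({-1, 0, 1} : Finset ℤ),
          (Real.sqrt (∑ p ∈ s, ∑ p' ∈ s, if j₁ p' = j₁ p then f p * f p' else 0)
            * Real.sqrt (∑ q ∈ t, ∑ q' ∈ t, if j₂ q' = j₂ q then g q * g q' else 0)) :=
        Finset.sum_le_sum fun δ _ => key_step s t f g hf hg j₁ j₂ δ
    _ = _ := by rw [Finset.sum_const, card3]; push_cast; ring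

/-- The bilinear count `S̃(X, α, β, N, K)`: the sum over `n₁, n₂ ∈ (N, 2N]` and
`x₁, x₂ ∈ X` with `|n₁x₁ - n₂x₂| ≤ K` of `α(x₁)α(x₂)|β(n₁)||β(n₂)|`. -/
noncomputable def Stilde (X : Finset ℝ) (α : ℝ → ℝ) (β : ℕ → ℂ) (N : ℕ) (K : ℝ) : ℝ :=
  ∑ n₁ ∈ Finset.Ioc N (2 * N), ∑ n₂ ∈ Finset.Ioc N (2 * N), ∑ x₁ ∈ X, ∑ x₂ ∈ X,
    if |(n₁ : ℝ) * x₁ - (n₂ : ℝ) * x₂| ≤ K then α x₁ * α x₂ * ‖β n₁‖ * ‖β n₂‖ else 0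

lemma quad_conv (I₁ I₂ : Finset ℕ) (X₁ X₂ : Finset ℝ) (G : ℕ → ℕ → ℝ → ℝ → ℝ) :
    ∑ n₁ ∈ I₁, ∑ n₂ ∈ I₂, ∑ x₁ ∈ X₁, ∑ x₂ ∈ X₂, G n₁ n₂ x₁ x₂
      = ∑ p ∈ I₁ ×ˢ X₁, ∑ q ∈ I₂ ×ˢ X₂, G p.1 q.1 p.2 q.2 := by
  rw [Finset.sum_product]
  refine Finset.sum_congr rfl fun n₁ _ => ?_
  rw [Finset.sum_comm]
  exact Finset.sum_congr rfl fun x₁ _ => by rw [Finset.sum_product]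

/-- Cauchy–Schwarz decoupling of a shifted bilinear count: the count of pairs
`(n₁x₁, n₂x₂)` within `K` of a fixed shift `y` is controlled by the geometric mean of the
corresponding unshifted counts with window `2K`. -/
theorem stmt8 :
    ∃ C > (0 : ℝ), ∀ (X₁ X₂ : Finset ℝ) (α : ℝ → ℝ) (β : ℕ → ℂ)
      (N₁ N₂ : ℕ) (y K : ℝ), 1 ≤ K →
      (∀ x ∈ X₁ ∪ X₂, 0 < α x) → (∀ x ∈ X₁ ∪ X₂, 0 < x) →
      ‖∑ n₁ ∈ Finset.Ioc N₁ (2 * N₁), ∑ n₂ ∈ Finset.Ioc N₂ (2 * N₂), ∑ x₁ ∈ X₁, ∑ x₂ ∈ X₂,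
          if |(n₁ : ℝ) * x₁ - (n₂ : ℝ) * x₂ - y| ≤ K then
            ((α x₁ * α x₂ : ℝ) : ℂ) * β n₁ * β n₂ else 0‖
        ≤ C * Real.sqrt (Stilde X₁ α β N₁ (2 * K)) * Real.sqrt (Stilde X₂ α β N₂ (2 * K)) := by
  refine ⟨3, by norm_num, ?_⟩
  intro X₁ X₂ α β N₁ N₂ y K hK hα _hx
  have hK0 : (0 : ℝ) < K := lt_of_lt_of_le one_pos hK
  have hα₁ : ∀ x ∈ X₁, 0 ≤ α x := fun x hx' => (hα x (Finset.mem_union_left _ hx')).le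
  have hα₂ : ∀ x ∈ X₂, 0 ≤ α x := fun x hx' => (hα x (Finset.mem_union_right _ hx')).le
  set I₁ := Finset.Ioc N₁ (2 * N₁)
  set I₂ := Finset.Ioc N₂ (2 * N₂)
  set f : ℕ × ℝ → ℝ := fun p => α p.2 * ‖β p.1‖ with hfdef
  have hf₁ : ∀ p ∈ I₁ ×ˢ X₁, 0 ≤ f p := fun p hp =>
    mul_nonneg (hα₁ p.2 (Finset.mem_product.mp hp).2) (norm_nonneg _)
  have hf₂ : ∀ p ∈ I₂ ×ˢ X₂, 0 ≤ f p := fun p hp =>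
    mul_nonneg (hα₂ p.2 (Finset.mem_product.mp hp).2) (norm_nonneg _)
  set j₁ : ℕ × ℝ → ℤ := fun p => ⌊((p.1 : ℝ) * p.2 - y) / K⌋ with hj₁def
  set j₂ : ℕ × ℝ → ℤ := fun p => ⌊((p.1 : ℝ) * p.2) / K⌋ with hj₂def
  -- Step 1 : bound the norm by the nonnegative count
  have step1 : ‖∑ n₁ ∈ I₁, ∑ n₂ ∈ I₂, ∑ x₁ ∈ X₁, ∑ x₂ ∈ X₂,
        if |(n₁ : ℝ) * x₁ - (n₂ : ℝ) * x₂ - y| ≤ K then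
          ((α x₁ * α x₂ : ℝ) : ℂ) * β n₁ * β n₂ else 0‖
      ≤ ∑ n₁ ∈ I₁, ∑ n₂ ∈ I₂, ∑ x₁ ∈ X₁, ∑ x₂ ∈ X₂,
        (if |(n₁ : ℝ) * x₁ - (n₂ : ℝ) * x₂ - y| ≤ K then
          (α x₁ * ‖β n₁‖) * (α x₂ * ‖β n₂‖) else 0) := by
    refine (norm_sum_le _ _).trans (Finset.sum_le_sum fun n₁ _ => ?_)
    refine (norm_sum_le _ _).trans (Finset.sum_le_sum fun n₂ _ => ?_)
    refine (norm_sum_le _ _).trans (Finset.sum_le_sum fun x₁ hx₁ => ?_)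
    refine (norm_sum_le _ _).trans (Finset.sum_le_sum fun x₂ hx₂ => ?_)
    split
    · rw [norm_mul, norm_mul, Complex.norm_real, Real.norm_eq_abs,
        abs_of_nonneg (mul_nonneg (hα₁ x₁ hx₁) (hα₂ x₂ hx₂))]
      apply le_of_eq; ring
    · simp
  -- Step 2 : pass to pair sums and decouple
  rw [quad_conv] at step1
  have step2 : ∑ p ∈ I₁ ×ˢ X₁, ∑ q ∈ I₂ ×ˢ X₂,
        (if |(p.1 : ℝ) * p.2 - (q.1 : ℝ) * q.2 - y| ≤ K then f p * f q else 0)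
      ≤ ∑ p ∈ I₁ ×ˢ X₁, ∑ q ∈ I₂ ×ˢ X₂,
        (if |j₁ p - j₂ q| ≤ 1 then f p * f q else 0) := by
    refine Finset.sum_le_sum fun p hp => Finset.sum_le_sum fun q hq => ?_
    by_cases h : |(p.1 : ℝ) * p.2 - (q.1 : ℝ) * q.2 - y| ≤ K
    · have hj : |j₁ p - j₂ q| ≤ 1 := by
        have := floor_close hK0 (a := (p.1 : ℝ) * p.2 - y) (b := (q.1 : ℝ) * q.2)
          (by rw [show (p.1 : ℝ) * p.2 - y - (q.1 : ℝ) * q.2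
            = (p.1 : ℝ) * p.2 - (q.1 : ℝ) * q.2 - y by ring]; exact h)
        exact this
      rw [if_pos h, if_pos hj]
    · rw [if_neg h]
      split
      · exact mul_nonneg (hf₁ p hp) (hf₂ q hq)
      · exact le_refl 0
  have step3 := key (I₁ ×ˢ X₁) (I₂ ×ˢ X₂) f f hf₁ hf₂ j₁ j₂
  -- Step 4 : bound diagonal sums by Stilde
  have diag : ∀ (I : Finset ℕ) (X : Finset ℝ) (j : ℕ × ℝ → ℤ)
      (hα' : ∀ x ∈ X, 0 ≤ α x)
      (hj : ∀ p p' : ℕ × ℝ, j p' = j p → |(p.1 : ℝ) * p.2 - (p'.1 : ℝ) * p'.2| ≤ 2 * K),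
      ∑ p ∈ I ×ˢ X, ∑ p' ∈ I ×ˢ X, (if j p' = j p then f p * f p' else 0)
        ≤ ∑ p ∈ I ×ˢ X, ∑ p' ∈ I ×ˢ X,
            (if |(p.1 : ℝ) * p.2 - (p'.1 : ℝ) * p'.2| ≤ 2 * K then f p * f p' else 0) := by
    intro I X j hα' hj
    refine Finset.sum_le_sum fun p hp => Finset.sum_le_sum fun p' hp' => ?_
    have hfn : 0 ≤ f p * f p' := mul_nonneg
      (mul_nonneg (hα' p.2 (Finset.mem_product.mp hp).2) (norm_nonneg _))
      (mul_nonneg (hα' p'.2 (Finset.mem_product.mp hp').2) (norm_nonneg _))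
    by_cases h : j p' = j p
    · rw [if_pos h, if_pos (hj p p' h)]
    · rw [if_neg h]
      split
      · exact hfn
      · exact le_refl 0
  have hdiag₁ : ∀ p p' : ℕ × ℝ, j₁ p' = j₁ p →
      |(p.1 : ℝ) * p.2 - (p'.1 : ℝ) * p'.2| ≤ 2 * K := by
    intro p p' h
    have := floor_eq_close hK0 (a := (p.1 : ℝ) * p.2 - y) (b := (p'.1 : ℝ) * p'.2 - y) h.symm
    rw [show (p.1 : ℝ) * p.2 - y - ((p'.1 : ℝ) * p'.2 - y)
      = (p.1 : ℝ) * p.2 - (p'.1 : ℝ) * p'.2 by ring] at this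
    exact this
  have hdiag₂ : ∀ p p' : ℕ × ℝ, j₂ p' = j₂ p →
      |(p.1 : ℝ) * p.2 - (p'.1 : ℝ) * p'.2| ≤ 2 * K := fun p p' h =>
    floor_eq_close hK0 h.symm
  have hSt₁ : Stilde X₁ α β N₁ (2 * K)
      = ∑ p ∈ I₁ ×ˢ X₁, ∑ p' ∈ I₁ ×ˢ X₁,
          (if |(p.1 : ℝ) * p.2 - (p'.1 : ℝ) * p'.2| ≤ 2 * K then f p * f p' else 0) := by
    rw [Stilde, quad_conv]
    refine Finset.sum_congr rfl fun p _ => Finset.sum_congr rfl fun p' _ => ?_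
    split
    · simp only [hfdef]; ring
    · rfl
  have hSt₂ : Stilde X₂ α β N₂ (2 * K)
      = ∑ p ∈ I₂ ×ˢ X₂, ∑ p' ∈ I₂ ×ˢ X₂,
          (if |(p.1 : ℝ) * p.2 - (p'.1 : ℝ) * p'.2| ≤ 2 * K then f p * f p' else 0) := by
    rw [Stilde, quad_conv]
    refine Finset.sum_congr rfl fun p _ => Finset.sum_congr rfl fun p' _ => ?_
    split
    · simp only [hfdef]; ring
    · rfl
  have sqrt1 : Real.sqrt (∑ p ∈ I₁ ×ˢ X₁, ∑ p' ∈ I₁ ×ˢ X₁,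
        (if j₁ p' = j₁ p then f p * f p' else 0))
      ≤ Real.sqrt (Stilde X₁ α β N₁ (2 * K)) := by
    rw [hSt₁]; exact Real.sqrt_le_sqrt (diag I₁ X₁ j₁ hα₁ hdiag₁)
  have sqrt2 : Real.sqrt (∑ q ∈ I₂ ×ˢ X₂, ∑ q' ∈ I₂ ×ˢ X₂,
        (if j₂ q' = j₂ q then f q * f q' else 0))
      ≤ Real.sqrt (Stilde X₂ α β N₂ (2 * K)) := by
    rw [hSt₂]; exact Real.sqrt_le_sqrt (diag I₂ X₂ j₂ hα₂ hdiag₂)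
  calc ‖∑ n₁ ∈ I₁, ∑ n₂ ∈ I₂, ∑ x₁ ∈ X₁, ∑ x₂ ∈ X₂,
        if |(n₁ : ℝ) * x₁ - (n₂ : ℝ) * x₂ - y| ≤ K then
          ((α x₁ * α x₂ : ℝ) : ℂ) * β n₁ * β n₂ else 0‖
      ≤ ∑ p ∈ I₁ ×ˢ X₁, ∑ q ∈ I₂ ×ˢ X₂,
          (if |(p.1 : ℝ) * p.2 - (q.1 : ℝ) * q.2 - y| ≤ K then f p * f q else 0) := step1
    _ ≤ ∑ p ∈ I₁ ×ˢ X₁, ∑ q ∈ I₂ ×ˢ X₂,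
          (if |j₁ p - j₂ q| ≤ 1 then f p * f q else 0) := step2
    _ ≤ 3 * (Real.sqrt (∑ p ∈ I₁ ×ˢ X₁, ∑ p' ∈ I₁ ×ˢ X₁,
            (if j₁ p' = j₁ p then f p * f p' else 0))
          * Real.sqrt (∑ q ∈ I₂ ×ˢ X₂, ∑ q' ∈ I₂ ×ˢ X₂,
            (if j₂ q' = j₂ q then f q * f q' else 0))) := step3
    _ ≤ 3 * (Real.sqrt (Stilde X₁ α β N₁ (2 * K))
          * Real.sqrt (Stilde X₂ α β N₂ (2 * K))) := by
        apply mul_le_mul_of_nonneg_left _ (by norm_num)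
        exact mul_le_mul sqrt1 sqrt2 (Real.sqrt_nonneg _) (Real.sqrt_nonneg _)
    _ = 3 * Real.sqrt (Stilde X₁ α β N₁ (2 * K))
          * Real.sqrt (Stilde X₂ α β N₂ (2 * K)) := by ring
end

section
/- Let X be a finite set of positive reals, α a positive weight on X, β complex, N ≥ 1, K ≥ 1, J ≥ 1. Define S̃(X, α, β, N, K) = ∑_{n₁,n₂∈(N,2N], x₁,x₂∈X, |n₁x₁-n₂x₂|≤K} α(x₁)α(x₂)β(n₁)β(n₂). Then |S̃(X, α, β, N, JK)| ≪ J · S̃(X, α, |β|, N, K), with an absolute implied constant. -/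
open Finset

/-- The bilinear count `S̃(X, α, β, N, K)` with weights `β` on the `n` variables. -/
noncomputable def StildeC (X : Finset ℝ) (α : ℝ → ℝ) (β : ℕ → ℂ) (N : ℕ) (K : ℝ) : ℂ :=
  ∑ n₁ ∈ Finset.Ioc N (2 * N), ∑ n₂ ∈ Finset.Ioc N (2 * N), ∑ x₁ ∈ X, ∑ x₂ ∈ X,
    if |(n₁ : ℝ) * x₁ - (n₂ : ℝ) * x₂| ≤ K then ((α x₁ * α x₂ : ℝ) : ℂ) * β n₁ * β n₂ else 0

/-- The bilinear count with `β` replaced by its absolute values. -/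
noncomputable def StildeAbs (X : Finset ℝ) (α : ℝ → ℝ) (β : ℕ → ℂ) (N : ℕ) (K : ℝ) : ℝ :=
  ∑ n₁ ∈ Finset.Ioc N (2 * N), ∑ n₂ ∈ Finset.Ioc N (2 * N), ∑ x₁ ∈ X, ∑ x₂ ∈ X,
    if |(n₁ : ℝ) * x₁ - (n₂ : ℝ) * x₂| ≤ K then α x₁ * α x₂ * ‖β n₁‖ * ‖β n₂‖ else 0

lemma quad_eq9 {M : Type*} [AddCommMonoid M] (A : Finset ℕ) (X : Finset ℝ)
    (g : ℕ → ℕ → ℝ → ℝ → M) :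
    ∑ n₁ ∈ A, ∑ n₂ ∈ A, ∑ x₁ ∈ X, ∑ x₂ ∈ X, g n₁ n₂ x₁ x₂
      = ∑ p ∈ A ×ˢ X, ∑ q ∈ A ×ˢ X, g p.1 q.1 p.2 q.2 := by
  simp only [Finset.sum_product]
  exact Finset.sum_congr rfl fun n₁ _ => Finset.sum_comm

lemma shift_le9 {ι : Type*} [DecidableEq ι] (T : Finset ι) (w : ι → ℝ)
    (hw : ∀ p ∈ T, 0 ≤ w p) (m : ι → ℤ) (d : ℤ) :
    ∑ p ∈ T, ∑ q ∈ T, (if m q = m p + d then w p * w q else 0)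
      ≤ ∑ p ∈ T, ∑ q ∈ T, (if m q = m p + 0 then w p * w q else 0) := by
  classical
  set W : ℤ → ℝ := fun k => ∑ q ∈ T.filter (fun q => m q = k), w q with hWdef
  have hWnn : ∀ k, 0 ≤ W k := fun k =>
    Finset.sum_nonneg fun q hq => hw q (Finset.mem_filter.mp hq).1
  have hW0 : ∀ k ∉ T.image m, W k = 0 := by
    intro k hk
    apply Finset.sum_eq_zero
    intro q hq
    exact absurd (Finset.mem_image_of_mem m (Finset.mem_filter.mp hq).1)
      (by rw [(Finset.mem_filter.mp hq).2] at *; exact hk)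
  have key : ∀ e : ℤ, ∑ p ∈ T, ∑ q ∈ T, (if m q = m p + e then w p * w q else 0)
      = ∑ k ∈ T.image m, W k * W (k + e) := by
    intro e
    have h1 : ∀ p ∈ T, ∑ q ∈ T, (if m q = m p + e then w p * w q else 0)
        = w p * W (m p + e) := by
      intro p hp
      simp only [hWdef, Finset.mul_sum, Finset.sum_filter, mul_ite, mul_zero]
    rw [Finset.sum_congr rfl h1,
      ← Finset.sum_fiberwise_of_maps_to (fun p hp => Finset.mem_image_of_mem m hp)
        (fun p => w p * W (m p + e))]
    refine Finset.sum_congr rfl fun k hk => ?_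
    have : ∀ p ∈ T.filter (fun p => m p = k), w p * W (m p + e) = w p * W (k + e) := by
      intro p hp
      rw [(Finset.mem_filter.mp hp).2]
    rw [Finset.sum_congr rfl this, ← Finset.sum_mul, Finset.sum_filter]
    congr 1
    simp only [hWdef, Finset.sum_filter]
  rw [key d, key 0]
  have sq_shift : ∑ k ∈ T.image m, W (k + d) ^ 2 ≤ ∑ k ∈ T.image m, W k ^ 2 := by
    have h2 : ∑ k ∈ (T.image m).image (· + d), W k ^ 2
        = ∑ k ∈ T.image m, W (k + d) ^ 2 :=
      Finset.sum_image (fun x _ y _ h => by omega)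
    rw [← h2]
    have hs : (T.image m).image (· + d) ⊆ (T.image m) ∪ (T.image m).image (· + d) :=
      Finset.subset_union_right
    calc ∑ k ∈ (T.image m).image (· + d), W k ^ 2
        ≤ ∑ k ∈ (T.image m) ∪ (T.image m).image (· + d), W k ^ 2 :=
          Finset.sum_le_sum_of_subset_of_nonneg hs (fun k _ _ => sq_nonneg _)
      _ = ∑ k ∈ T.image m, W k ^ 2 := by
          refine (Finset.sum_subset Finset.subset_union_left fun k _ hk => ?_).symm
          rw [hW0 k hk]; ring
  calc ∑ k ∈ T.image m, W k * W (k + d)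
      ≤ ∑ k ∈ T.image m, (W k ^ 2 + W (k + d) ^ 2) / 2 := by
        refine Finset.sum_le_sum fun k _ => ?_
        nlinarith [sq_nonneg (W k - W (k + d))]
    _ ≤ ∑ k ∈ T.image m, W k ^ 2 := by
        rw [← Finset.sum_div, Finset.sum_add_distrib]
        linarith [sq_shift]
    _ = ∑ k ∈ T.image m, W k * W (k + 0) := by
        refine Finset.sum_congr rfl fun k _ => ?_
        rw [add_zero]; ring


/-- Linearity in the threshold parameter: enlarging the window from `K` to `JK`
increases the bilinear count by at most `O(J)` times the count with `|β|`. -/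
theorem stmt9 :
    ∃ C > (0 : ℝ), ∀ (X : Finset ℝ) (α : ℝ → ℝ) (β : ℕ → ℂ) (N : ℕ) (K J : ℝ),
      1 ≤ K → 1 ≤ J → 1 ≤ N → (∀ x ∈ X, 0 < α x) → (∀ x ∈ X, 0 < x) →
      ‖StildeC X α β N (J * K)‖ ≤ C * J * StildeAbs X α β N K := by
  classical
  refine ⟨7, by norm_num, ?_⟩
  intro X α β N K J hK hJ hN hα hX
  have hK0 : (0:ℝ) < K := lt_of_lt_of_le one_pos hK
  have hJ0 : (0:ℝ) < J := lt_of_lt_of_le one_pos hJ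
  set A : Finset ℕ := Finset.Ioc N (2*N) with hA
  set T : Finset (ℕ × ℝ) := A ×ˢ X with hT
  set w : ℕ × ℝ → ℝ := fun p => α p.2 * ‖β p.1‖ with hw
  set f : ℕ × ℝ → ℝ := fun p => (p.1 : ℝ) * p.2 with hf
  have hwnn : ∀ p ∈ T, 0 ≤ w p := by
    intro p hp
    rw [hT, Finset.mem_product] at hp
    exact mul_nonneg (le_of_lt (hα _ hp.2)) (norm_nonneg _)
  set E : ℝ → ℝ := fun L => ∑ p ∈ T, ∑ q ∈ T,
    if |f p - f q| ≤ L then w p * w q else 0 with hE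
  -- StildeAbs = E K
  have habs : StildeAbs X α β N K = E K := by
    rw [StildeAbs, quad_eq9 A X
      (fun n₁ n₂ x₁ x₂ => if |(n₁:ℝ) * x₁ - (n₂:ℝ) * x₂| ≤ K
        then α x₁ * α x₂ * ‖β n₁‖ * ‖β n₂‖ else 0)]
    refine Finset.sum_congr rfl fun p _ => Finset.sum_congr rfl fun q _ => ?_
    simp only [hE, hf, hw]
    split <;> ring
  -- norm bound
  have hnorm : ‖StildeC X α β N (J*K)‖ ≤ E (J*K) := by
    rw [StildeC, quad_eq9 A X
      (fun n₁ n₂ x₁ x₂ => if |(n₁:ℝ) * x₁ - (n₂:ℝ) * x₂| ≤ J*K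
        then ((α x₁ * α x₂ : ℝ) : ℂ) * β n₁ * β n₂ else 0)]
    calc ‖∑ p ∈ T, ∑ q ∈ T, if |(p.1:ℝ) * p.2 - (q.1:ℝ) * q.2| ≤ J*K
            then ((α p.2 * α q.2 : ℝ) : ℂ) * β p.1 * β q.1 else 0‖
        ≤ ∑ p ∈ T, ‖∑ q ∈ T, if |(p.1:ℝ) * p.2 - (q.1:ℝ) * q.2| ≤ J*K
            then ((α p.2 * α q.2 : ℝ) : ℂ) * β p.1 * β q.1 else 0‖ :=
          norm_sum_le _ _
      _ ≤ ∑ p ∈ T, ∑ q ∈ T, ‖if |(p.1:ℝ) * p.2 - (q.1:ℝ) * q.2| ≤ J*K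
            then ((α p.2 * α q.2 : ℝ) : ℂ) * β p.1 * β q.1 else 0‖ :=
          Finset.sum_le_sum fun p _ => norm_sum_le _ _
      _ ≤ E (J*K) := by
          refine Finset.sum_le_sum fun p hp => Finset.sum_le_sum fun q hq => ?_
          rw [hT, Finset.mem_product] at hp hq
          simp only [hE, hf, hw]
          split
          · rw [norm_mul, norm_mul, Complex.norm_real, Real.norm_eq_abs,
              abs_mul, abs_of_pos (hα _ hp.2), abs_of_pos (hα _ hq.2)]
            ring_nf
            exact le_refl _
          · simp
  -- the binning
  set m : ℕ × ℝ → ℤ := fun p => ⌊2 * f p / K⌋ with hm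
  set L : ℤ := ⌊2*J⌋ + 1 with hL
  have hfloor : ∀ a b : ℝ, a - b ≤ 2*J → ⌊a⌋ ≤ ⌊b⌋ + L := by
    intro a b h
    have h1 : (⌊a⌋:ℝ) ≤ a := Int.floor_le a
    have h2 : b < ⌊b⌋ + 1 := Int.lt_floor_add_one b
    have h3 : (2*J:ℝ) < ⌊(2*J:ℝ)⌋ + 1 := Int.lt_floor_add_one _
    have h4 : (⌊a⌋:ℝ) < (⌊b⌋:ℝ) + (⌊(2*J:ℝ)⌋:ℝ) + 2 := by linarith
    have h5 : ⌊a⌋ < ⌊b⌋ + ⌊(2*J:ℝ)⌋ + 2 := by exact_mod_cast h4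
    omega
  have hmem : ∀ p q : ℕ × ℝ, |f p - f q| ≤ J*K → m q - m p ∈ Finset.Icc (-L) L := by
    intro p q h
    rw [abs_le] at h
    have hd1 : 2 * f q / K - 2 * f p / K ≤ 2*J := by
      rw [div_sub_div_same, div_le_iff₀ hK0]
      nlinarith
    have hd2 : 2 * f p / K - 2 * f q / K ≤ 2*J := by
      rw [div_sub_div_same, div_le_iff₀ hK0]
      nlinarith
    have e1 := hfloor _ _ hd1
    have e2 := hfloor _ _ hd2
    simp only [hm, Finset.mem_Icc]
    omega
  set S : ℤ → ℝ := fun d => ∑ p ∈ T, ∑ q ∈ T,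
    if m q = m p + d then w p * w q else 0 with hS
  have hS0nn : 0 ≤ S 0 := by
    refine Finset.sum_nonneg fun p hp => Finset.sum_nonneg fun q hq => ?_
    split
    · exact mul_nonneg (hwnn p hp) (hwnn q hq)
    · exact le_refl 0
  have hSd : ∀ d, S d ≤ S 0 := by
    intro d
    have := shift_le9 T w hwnn m d
    simpa [hS] using this
  have hS0E : S 0 ≤ E K := by
    refine Finset.sum_le_sum fun p hp => Finset.sum_le_sum fun q hq => ?_
    by_cases h : m q = m p + 0
    · rw [if_pos h]
      have hmeq : m p = m q := by omega
      have h1 : (m p : ℝ) ≤ 2 * f p / K := Int.floor_le _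
      have h2 : 2 * f p / K < m p + 1 := Int.lt_floor_add_one _
      have h3 : (m q : ℝ) ≤ 2 * f q / K := Int.floor_le _
      have h4 : 2 * f q / K < m q + 1 := Int.lt_floor_add_one _
      have hfp : |f p - f q| ≤ K := by
        rw [hmeq] at h1 h2
        have e1 : (2*(f p - f q))/K < 1 := by
          have : 2*(f p - f q)/K = 2*f p/K - 2*f q/K := by ring
          rw [this]; linarith
        have e2 : (2*(f q - f p))/K < 1 := by
          have : 2*(f q - f p)/K = 2*f q/K - 2*f p/K := by ring
          rw [this]; linarith
        have g1 := (div_lt_one hK0).mp e1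
        have g2 := (div_lt_one hK0).mp e2
        rw [abs_le]
        constructor <;> linarith
      rw [if_pos hfp]
    · rw [if_neg h]
      split
      · exact mul_nonneg (hwnn p hp) (hwnn q hq)
      · exact le_refl 0
  have swap : ∑ d ∈ Finset.Icc (-L) L, S d
      = ∑ p ∈ T, ∑ q ∈ T, ∑ d ∈ Finset.Icc (-L) L,
        (if m q = m p + d then w p * w q else 0) := by
    simp only [hS]
    rw [Finset.sum_comm]
    exact Finset.sum_congr rfl fun p _ => Finset.sum_comm
  have step1 : E (J*K) ≤ ∑ d ∈ Finset.Icc (-L) L, S d := by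
    rw [swap]
    refine Finset.sum_le_sum fun p hp => Finset.sum_le_sum fun q hq => ?_
    have hwpq : 0 ≤ w p * w q := mul_nonneg (hwnn p hp) (hwnn q hq)
    have hnn : ∀ d ∈ Finset.Icc (-L) L,
        0 ≤ (if m q = m p + d then w p * w q else 0) := by
      intro d _
      split
      · exact hwpq
      · exact le_refl 0
    split
    · next h =>
        have hd := hmem p q h
        have := Finset.single_le_sum hnn hd
        simpa using this
    · exact Finset.sum_nonneg hnn
  have hcard : ((Finset.Icc (-L) L).card : ℝ) = 2*(L:ℝ)+1 := by
    have hL1 : 1 ≤ L := by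
      have h6 : (1:ℤ) ≤ ⌊(2*J:ℝ)⌋ := Int.le_floor.mpr (by push_cast; linarith)
      simp only [hL]
      omega
    have h8 : (((Finset.Icc (-L) L).card : ℤ)) = 2*L+1 := by
      rw [Int.card_Icc]; omega
    exact_mod_cast h8
  have hLle : (L:ℝ) ≤ 2*J + 1 := by
    have := Int.floor_le (2*J : ℝ)
    simp only [hL]
    push_cast
    linarith
  have step2 : ∑ d ∈ Finset.Icc (-L) L, S d ≤ (2*(L:ℝ)+1) * S 0 := by
    calc ∑ d ∈ Finset.Icc (-L) L, S d ≤ ∑ _d ∈ Finset.Icc (-L) L, S 0 :=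
          Finset.sum_le_sum fun d _ => hSd d
      _ = ((Finset.Icc (-L) L).card : ℝ) * S 0 := by
          rw [Finset.sum_const, nsmul_eq_mul]
      _ = (2*(L:ℝ)+1) * S 0 := by rw [hcard]
  have hfin : (2*(L:ℝ)+1) * S 0 ≤ 7 * J * E K := by
    calc (2*(L:ℝ)+1) * S 0 ≤ (7*J) * S 0 := by
          apply mul_le_mul_of_nonneg_right _ hS0nn
          linarith
      _ ≤ 7 * J * E K := by
          apply mul_le_mul_of_nonneg_left hS0E
          positivity
  calc ‖StildeC X α β N (J*K)‖ ≤ E (J*K) := hnorm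
    _ ≤ ∑ d ∈ Finset.Icc (-L) L, S d := step1
    _ ≤ (2*(L:ℝ)+1) * S 0 := step2
    _ ≤ 7 * J * E K := hfin
    _ = 7 * J * StildeAbs X α β N K := by rw [habs]
end

section
/- Let (x_n) be a strictly increasing sequence of positive reals with x_{n+1} - x_n ≥ c·n^{-(1-η)} for some c > 0 and η ∈ (0,1]. Then for every ε > 0, the number of triples (m, n₁, n₂) with 1 ≤ m ≤ N^{1+ε}, 1 ≤ n₁ < n₂ ≤ N and m(x_{n₂} - x_{n₁}) < N^ε is ≪ N^{2-η+2ε}, with implied constant depending on c, η, ε. -/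
/-!
Telescoping the gap condition gives `x n₂ - x n₁ ≥ (n₂ - n₁) δ` with `δ = c N^{-(1-η)}` for
`1 ≤ n₁ ≤ n₂ ≤ N`. Hence for fixed `m` an admissible pair has `n₂ - n₁ ≤ N^ε / (m δ)`, so there are
at most `N · N^ε / (m δ)` of them. Summing over `m ≤ N^{1+ε}` costs a harmonic factor
`1 + log N^{1+ε} ≪ N^ε`, and `N · N^ε / δ · N^ε = N^{2-η+2ε} / c`.
-/

open Finset

theorem natCast_sub_mul_le_sub_of_le_sub_succ {x : ℕ → ℝ} {δ : ℝ} {a b : ℕ} (hab : a ≤ b)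
    (h : ∀ n ∈ Ico a b, δ ≤ x (n + 1) - x n) : ((b - a : ℕ) : ℝ) * δ ≤ x b - x a := by
  have := (Ico a b).card_nsmul_le_sum _ δ h
  rwa [Finset.sum_Ico_sub x hab, Nat.card_Ico, nsmul_eq_mul] at this

theorem card_filter_product_eq_sum {α β : Type*} (s : Finset α) (t : Finset β)
    (p : α → β → Prop) [∀ a b, Decidable (p a b)] :
    #((s ×ˢ t).filter fun q => p q.1 q.2) = ∑ a ∈ s, #(t.filter (p a)) := by
  simp only [card_filter, sum_product]

theorem card_filter_lt_sub_le (N : ℕ) {B : ℝ} (hB : 0 ≤ B) :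
    (#((Icc 1 N ×ˢ Icc 1 N).filter fun p : ℕ × ℕ => p.1 < p.2 ∧ ((p.2 - p.1 : ℕ) : ℝ) ≤ B) : ℝ)
      ≤ N * B := by
  have hinj : #((Icc 1 N ×ˢ Icc 1 N).filter
      fun p : ℕ × ℕ => p.1 < p.2 ∧ ((p.2 - p.1 : ℕ) : ℝ) ≤ B) ≤ #(Icc 1 N ×ˢ Icc 1 ⌊B⌋₊) := by
    refine card_le_card_of_injOn (fun p => (p.1, p.2 - p.1)) ?_ ?_
    · intro p hp
      simp only [coe_filter, mem_product, mem_Icc, Set.mem_ofPred_eq, mem_coe] at hp ⊢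
      exact ⟨hp.1.1, by omega, Nat.le_floor hp.2.2⟩
    · intro p hp q hq hpq
      simp only [coe_filter, mem_product, mem_Icc, Set.mem_ofPred_eq, Prod.mk.injEq] at hp hq hpq
      exact Prod.ext hpq.1 (by omega)
  calc (_ : ℝ) ≤ #(Icc 1 N ×ˢ Icc 1 ⌊B⌋₊) := by exact_mod_cast hinj
    _ = N * ⌊B⌋₊ := by simp
    _ ≤ N * B := by gcongr; exact Nat.floor_le hB

theorem sum_Icc_inv_le_one_add_log (M : ℕ) : ∑ m ∈ Icc 1 M, (m : ℝ)⁻¹ ≤ 1 + Real.log M := by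
  simpa [harmonic_eq_sum_Icc] using harmonic_le_one_add_log M

theorem card_filter_mul_sub_lt_le {x : ℕ → ℝ} {δ m T : ℝ} {N : ℕ} (hδ : 0 < δ) (hm : 0 < m)
    (hT : 0 ≤ T) (hgap : ∀ n ∈ Ico 1 N, δ ≤ x (n + 1) - x n) :
    (#((Icc 1 N ×ˢ Icc 1 N).filter fun p : ℕ × ℕ => p.1 < p.2 ∧ m * (x p.2 - x p.1) < T) : ℝ)
      ≤ N * (T / (m * δ)) := by
  refine le_trans ?_ (card_filter_lt_sub_le N (by positivity))
  gcongr with p hp hlt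
  intro hsmall
  simp only [mem_product, mem_Icc] at hp
  have hdiff : ((p.2 - p.1 : ℕ) : ℝ) * δ ≤ x p.2 - x p.1 :=
    natCast_sub_mul_le_sub_of_le_sub_succ hlt.le fun n hn => hgap n (by
      simp only [mem_Ico] at hn ⊢; omega)
  rw [le_div_iff₀ (by positivity)]
  calc ((p.2 - p.1 : ℕ) : ℝ) * (m * δ) = m * (((p.2 - p.1 : ℕ) : ℝ) * δ) := by ring
    _ ≤ m * (x p.2 - x p.1) := by gcongr
    _ ≤ T := hsmall.le

theorem card_filter_mul_sub_lt_triples_le {x : ℕ → ℝ} {δ T : ℝ} {M N : ℕ} (hδ : 0 < δ)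
    (hT : 0 ≤ T) (hgap : ∀ n ∈ Ico 1 N, δ ≤ x (n + 1) - x n) :
    (#((Icc 1 M ×ˢ (Icc 1 N ×ˢ Icc 1 N)).filter fun t : ℕ × ℕ × ℕ =>
        t.2.1 < t.2.2 ∧ (t.1 : ℝ) * (x t.2.2 - x t.2.1) < T) : ℝ)
      ≤ N * T / δ * (1 + Real.log M) := by
  rw [card_filter_product_eq_sum (p := fun (m : ℕ) (p : ℕ × ℕ) =>
    p.1 < p.2 ∧ (m : ℝ) * (x p.2 - x p.1) < T)]
  push_cast
  calc _ ≤ ∑ m ∈ Icc 1 M, N * T / δ * (m : ℝ)⁻¹ := by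
        refine sum_le_sum fun m hm => ?_
        have hm : (0 : ℝ) < m := by simp only [mem_Icc] at hm; exact_mod_cast hm.1
        refine (card_filter_mul_sub_lt_le hδ hm hT hgap).trans_eq ?_
        field_simp
    _ = N * T / δ * ∑ m ∈ Icc 1 M, (m : ℝ)⁻¹ := (mul_sum ..).symm
    _ ≤ N * T / δ * (1 + Real.log M) := by
        gcongr
        exact sum_Icc_inv_le_one_add_log M

theorem one_add_log_le_mul_rpow {M N ε : ℝ} (hM : 0 < M) (hMN : M ≤ N ^ (1 + ε)) (hN : 1 ≤ N)
    (hε : 0 < ε) : 1 + Real.log M ≤ (1 + (1 + ε) / ε) * N ^ ε := by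
  have hlogM : Real.log M ≤ (1 + ε) * Real.log N := by
    rw [← Real.log_rpow (by linarith)]
    exact Real.log_le_log hM hMN
  have hlogN : Real.log N ≤ N ^ ε / ε := Real.log_le_rpow_div (by linarith) hε
  have hNε : 1 ≤ N ^ ε := Real.one_le_rpow hN hε.le
  calc 1 + Real.log M ≤ N ^ ε + (1 + ε) * (N ^ ε / ε) := by gcongr; exact hlogM.trans (by gcongr)
    _ = (1 + (1 + ε) / ε) * N ^ ε := by ring

theorem stmt10_general (x : ℕ → ℝ) (c η ε : ℝ) (hc : 0 < c) (hη1 : η ≤ 1) (hε : 0 < ε)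
    (hgap : ∀ n : ℕ, 1 ≤ n → c * (n : ℝ) ^ (-(1 - η)) ≤ x (n + 1) - x n) :
    ∃ C > (0 : ℝ), ∀ N : ℕ,
      (((Finset.Icc 1 (Nat.floor ((N : ℝ) ^ (1 + ε))) ×ˢ (Finset.Icc 1 N ×ˢ Finset.Icc 1 N)).filter
          (fun t => t.2.1 < t.2.2 ∧ (t.1 : ℝ) * (x t.2.2 - x t.2.1) < (N : ℝ) ^ ε)).card : ℝ)
        ≤ C * (N : ℝ) ^ (2 - η + 2 * ε) := by
  refine ⟨(1 + (1 + ε) / ε) / c, by positivity, fun N => ?_⟩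
  rcases N.eq_zero_or_pos with rfl | hN
  · simp only [CharP.cast_eq_zero, Order.lt_one_iff, Icc_eq_empty_of_lt, product_empty, filter_empty,
      card_empty]
    positivity
  have hN1 : (1 : ℝ) ≤ N := by exact_mod_cast hN
  have hN0 : (0 : ℝ) < N := by positivity
  have hgapN : ∀ n ∈ Ico 1 N, c * (N : ℝ) ^ (-(1 - η)) ≤ x (n + 1) - x n := by
    intro n hn
    simp only [mem_Ico] at hn
    refine (mul_le_mul_of_nonneg_left ?_ hc.le).trans (hgap n hn.1)
    exact Real.rpow_le_rpow_of_nonpos (by exact_mod_cast hn.1) (by exact_mod_cast hn.2.le)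
      (by linarith)
  have hM : (0 : ℝ) < ⌊(N : ℝ) ^ (1 + ε)⌋₊ := by
    exact_mod_cast Nat.floor_pos.2 (Real.one_le_rpow hN1 (by linarith))
  calc _ ≤ N * (N : ℝ) ^ ε / (c * (N : ℝ) ^ (-(1 - η))) * (1 + Real.log ⌊(N : ℝ) ^ (1 + ε)⌋₊) :=
        card_filter_mul_sub_lt_triples_le (by positivity) (by positivity) hgapN
    _ ≤ N * (N : ℝ) ^ ε / (c * (N : ℝ) ^ (-(1 - η))) * ((1 + (1 + ε) / ε) * (N : ℝ) ^ ε) := by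
        gcongr
        exact one_add_log_le_mul_rpow hM (Nat.floor_le (by positivity)) hN1 hε
    _ = (1 + (1 + ε) / ε) / c * (N : ℝ) ^ (2 - η + 2 * ε) := by
        rw [show 2 - η + 2 * ε = 1 + ε + ε + (1 - η) by ring, Real.rpow_add hN0,
          Real.rpow_add hN0, Real.rpow_add hN0, Real.rpow_one, Real.rpow_neg hN0.le]
        field_simp

/-- First Rudnick–Technau counting condition under a polynomial gap lower bound:
the number of triples `(m, n₁, n₂)` with `1 ≤ m ≤ N^{1+ε}`, `1 ≤ n₁ < n₂ ≤ N` and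
`m(x_{n₂} - x_{n₁}) < N^ε` is `≪ N^{2-η+2ε}`. -/
theorem stmt10 (x : ℕ → ℝ) (c η ε : ℝ) (hc : 0 < c) (hη0 : 0 < η) (hη1 : η ≤ 1)
    (hε : 0 < ε) (hpos : ∀ n ≥ 1, 0 < x n) (hmono : ∀ n ≥ 1, x n < x (n + 1))
    (hgap : ∀ n : ℕ, 1 ≤ n → c * (n : ℝ) ^ (-(1 - η)) ≤ x (n + 1) - x n) :
    ∃ C > (0 : ℝ), ∀ N : ℕ,
      (((Finset.Icc 1 (Nat.floor ((N : ℝ) ^ (1 + ε))) ×ˢ (Finset.Icc 1 N ×ˢ Finset.Icc 1 N)).filter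
          (fun t => t.2.1 < t.2.2 ∧ (t.1 : ℝ) * (x t.2.2 - x t.2.1) < (N : ℝ) ^ ε)).card : ℝ)
        ≤ C * (N : ℝ) ^ (2 - η + 2 * ε) :=
  stmt10_general x c η ε hc hη1 hε hgap
end

section
/- Let (x_n) be a sequence of positive reals such that for all X, H ≥ 1, #{n : x_n ∈ [X, X+H]} ≤ C·H^{1/2} for some constant C. Then ∑_{1≤n₁<n₂≤N, x_{n₂}-x_{n₁}≥1} (x_{n₂} - x_{n₁})^{-1/2} ≪ N^{1+o(1)}; more precisely it is ≪ N (1 + log N) under the additional assumption that all x_n ≤ N^{O(1)}, and in general ≪ N·∑_{j≥0} min{N, 2^{j/2}}/2^{j/2}. -/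
open Finset

private lemma rpow_half_nat (j : ℕ) : (2:ℝ) ^ ((j:ℝ)/2) = ((2:ℝ) ^ ((1:ℝ)/2)) ^ j := by
  rw [← Real.rpow_natCast ((2:ℝ) ^ ((1:ℝ)/2)) j, ← Real.rpow_mul (by norm_num : (0:ℝ) ≤ 2)]
  ring_nf

private lemma g_summable (N : ℕ) :
    Summable (fun j : ℕ => min (N:ℝ) ((2:ℝ) ^ ((j:ℝ)/2)) / (2:ℝ) ^ ((j:ℝ)/2)) := by
  have h1 : (1:ℝ) < 2 ^ ((1:ℝ)/2) := by
    rw [show (1:ℝ) = (2:ℝ) ^ (0:ℝ) by simp]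
    exact Real.rpow_lt_rpow_of_exponent_lt one_lt_two (by norm_num)
  have hpos : (0:ℝ) < 2 ^ ((1:ℝ)/2) := lt_trans one_pos h1
  have hsum : Summable (fun j : ℕ => (N:ℝ) * (((2:ℝ) ^ ((1:ℝ)/2))⁻¹) ^ j) :=
    (summable_geometric_of_lt_one (by positivity) ((inv_lt_one₀ hpos).mpr h1)).mul_left _
  refine Summable.of_nonneg_of_le (fun j => ?_) (fun j => ?_) hsum
  · have h2 : (0:ℝ) < 2 ^ ((j:ℝ)/2) := Real.rpow_pos_of_pos two_pos _
    exact div_nonneg (le_min (Nat.cast_nonneg N) h2.le) h2.le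
  · rw [rpow_half_nat, div_eq_mul_inv, ← inv_pow]
    exact mul_le_mul_of_nonneg_right (min_le_left _ _) (by positivity)

/-- Under the short-interval non-concentration hypothesis (no interval `[X, X+H]` with
`X, H ≥ 1` contains more than `C·H^{1/2}` terms of the sequence), the weighted sum
`∑_{n₁<n₂≤N, x_{n₂}-x_{n₁}≥1} (x_{n₂}-x_{n₁})^{-1/2}` is
`≪ N · ∑_{j≥0} min{N, 2^{j/2}}/2^{j/2}`. -/
theorem stmt13 (x : ℕ → ℝ) (C : ℝ) (hC : 0 < C) (hpos : ∀ n ≥ 1, 0 < x n)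
    (hconc : ∀ X H : ℝ, 1 ≤ X → 1 ≤ H → ∀ s : Finset ℕ,
      (∀ n ∈ s, x n ∈ Set.Icc X (X + H)) → (s.card : ℝ) ≤ C * H ^ ((1 : ℝ) / 2)) :
    ∃ C' > (0 : ℝ), ∀ N : ℕ,
      (∑ n₁ ∈ Finset.Icc 1 N, ∑ n₂ ∈ Finset.Icc 1 N,
          if n₁ < n₂ ∧ 1 ≤ x n₂ - x n₁ then (x n₂ - x n₁) ^ (-(1 : ℝ) / 2) else 0)
        ≤ C' * (N : ℝ) *
            ∑' j : ℕ, min (N : ℝ) ((2 : ℝ) ^ ((j : ℝ) / 2)) / (2 : ℝ) ^ ((j : ℝ) / 2) := by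
  set M : ℝ := max C 1 with hM
  have hM1 : (1:ℝ) ≤ M := le_max_right _ _
  have hMC : C ≤ M := le_max_left _ _
  refine ⟨M, lt_of_lt_of_le one_pos hM1, fun N => ?_⟩
  set g : ℕ → ℝ := fun j => min (N:ℝ) ((2:ℝ) ^ ((j:ℝ)/2)) / (2:ℝ) ^ ((j:ℝ)/2) with hgdef
  have hgnn : ∀ j, 0 ≤ g j := by
    intro j
    have h2 : (0:ℝ) < 2 ^ ((j:ℝ)/2) := Real.rpow_pos_of_pos two_pos _
    exact div_nonneg (le_min (Nat.cast_nonneg N) h2.le) h2.le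
  have hgsum : Summable g := g_summable N
  have key : ∀ n₁ ∈ Finset.Icc 1 N,
      (∑ n₂ ∈ Finset.Icc 1 N,
          if n₁ < n₂ ∧ 1 ≤ x n₂ - x n₁ then (x n₂ - x n₁) ^ (-(1:ℝ)/2) else 0)
        ≤ M * ∑' j, g j := by
    intro n₁ hn₁
    rw [← Finset.sum_filter]
    set T : Finset ℕ := (Finset.Icc 1 N).filter (fun n₂ => n₁ < n₂ ∧ 1 ≤ x n₂ - x n₁) with hT
    have hd1 : ∀ n₂ ∈ T, 1 ≤ x n₂ - x n₁ := fun n₂ h => (Finset.mem_filter.mp h).2.2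
    -- choose J bounding all differences
    obtain ⟨B, hB⟩ := Finset.exists_le (T.image fun n₂ => x n₂ - x n₁)
    obtain ⟨J, hJ⟩ := pow_unbounded_of_one_lt B (one_lt_two (α := ℝ))
    have hJbound : ∀ n₂ ∈ T, x n₂ - x n₁ < 2 ^ ((J:ℝ)) := by
      intro n₂ h
      have h1 : x n₂ - x n₁ ≤ B := hB _ (Finset.mem_image_of_mem _ h)
      have : (2:ℝ) ^ ((J:ℝ)) = 2 ^ J := Real.rpow_natCast 2 J
      rw [this]; linarith
    set A : ℕ → Finset ℕ := fun j => T.filter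
      (fun n₂ => (2:ℝ) ^ ((j:ℝ)) ≤ x n₂ - x n₁ ∧ x n₂ - x n₁ < 2 ^ ((j:ℝ) + 1)) with hA
    have hcover : T = (Finset.range J).biUnion A := by
      apply Finset.Subset.antisymm
      · intro n₂ hmem
        have hd := hd1 n₂ hmem
        set d := x n₂ - x n₁ with hdd
        have hdpos : (0:ℝ) < d := lt_of_lt_of_le one_pos hd
        set j : ℕ := ⌊Real.logb 2 d⌋.toNat with hj
        have hlognn : 0 ≤ Real.logb 2 d := Real.logb_nonneg one_lt_two hd
        have hfl : (j : ℤ) = ⌊Real.logb 2 d⌋ := by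
          rw [hj]; exact Int.toNat_of_nonneg (Int.floor_nonneg.mpr hlognn)
        have hjle : (j:ℝ) ≤ Real.logb 2 d := by
          have h := Int.floor_le (Real.logb 2 d)
          rw [← hfl] at h; exact_mod_cast h
        have hjgt : Real.logb 2 d < (j:ℝ) + 1 := by
          have h := Int.lt_floor_add_one (Real.logb 2 d)
          rw [← hfl] at h; exact_mod_cast h
        have hrlog : (2:ℝ) ^ (Real.logb 2 d) = d :=
          Real.rpow_logb two_pos (by norm_num) hdpos
        have hlow : (2:ℝ) ^ ((j:ℝ)) ≤ d := by
          rw [← hrlog]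
          exact Real.rpow_le_rpow_of_exponent_le one_le_two hjle
        have hhigh : d < (2:ℝ) ^ ((j:ℝ) + 1) := by
          rw [← hrlog]
          exact Real.rpow_lt_rpow_of_exponent_lt one_lt_two hjgt
        have hjJ : j < J := by
          by_contra hcon
          push_neg at hcon
          have : (2:ℝ) ^ ((J:ℝ)) ≤ 2 ^ ((j:ℝ)) :=
            Real.rpow_le_rpow_of_exponent_le one_le_two (by exact_mod_cast hcon)
          have := hJbound n₂ hmem
          linarith
        exact Finset.mem_biUnion.mpr ⟨j, Finset.mem_range.mpr hjJ,
          Finset.mem_filter.mpr ⟨hmem, hlow, hhigh⟩⟩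
      · intro n₂ hmem
        obtain ⟨j, _, hj⟩ := Finset.mem_biUnion.mp hmem
        exact Finset.mem_of_mem_filter _ hj
    have hdisj : (↑(Finset.range J) : Set ℕ).PairwiseDisjoint A := by
      have main : ∀ i j : ℕ, i < j → Disjoint (A i) (A j) := by
        intro i j h
        rw [Finset.disjoint_left]
        intro n₂ hi hj'
        have h1 := (Finset.mem_filter.mp hi).2.2
        have h2 := (Finset.mem_filter.mp hj').2.1
        have hle : (2:ℝ) ^ ((i:ℝ) + 1) ≤ 2 ^ ((j:ℝ)) := by
          apply Real.rpow_le_rpow_of_exponent_le one_le_two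
          have : (i:ℝ) + 1 ≤ (j:ℝ) := by exact_mod_cast h
          linarith
        linarith
      intro i _ j _ hij
      rcases lt_or_gt_of_ne hij with h | h
      · exact main i j h
      · exact (main j i h).symm
    rw [hcover, Finset.sum_biUnion hdisj]
    have hstep : ∀ j ∈ Finset.range J,
        (∑ n₂ ∈ A j, (x n₂ - x n₁) ^ (-(1:ℝ)/2)) ≤ M * g j := by
      intro j _
      have h2j : (0:ℝ) < 2 ^ ((j:ℝ)) := Real.rpow_pos_of_pos two_pos _
      have h2jh : (0:ℝ) < 2 ^ ((j:ℝ)/2) := Real.rpow_pos_of_pos two_pos _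
      have hterm : ∀ n₂ ∈ A j, (x n₂ - x n₁) ^ (-(1:ℝ)/2) ≤ ((2:ℝ) ^ ((j:ℝ)/2))⁻¹ := by
        intro n₂ h
        have hlo := (Finset.mem_filter.mp h).2.1
        have : (x n₂ - x n₁) ^ (-(1:ℝ)/2) ≤ ((2:ℝ) ^ ((j:ℝ))) ^ (-(1:ℝ)/2) :=
          Real.rpow_le_rpow_of_nonpos h2j hlo (by norm_num)
        refine this.trans_eq ?_
        rw [← Real.rpow_mul (by norm_num : (0:ℝ) ≤ 2),
          ← Real.rpow_neg (by norm_num : (0:ℝ) ≤ 2)]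
        congr 1; ring
      have hsum1 : (∑ n₂ ∈ A j, (x n₂ - x n₁) ^ (-(1:ℝ)/2))
          ≤ (A j).card * ((2:ℝ) ^ ((j:ℝ)/2))⁻¹ := by
        calc (∑ n₂ ∈ A j, (x n₂ - x n₁) ^ (-(1:ℝ)/2))
            ≤ ∑ _n₂ ∈ A j, ((2:ℝ) ^ ((j:ℝ)/2))⁻¹ := Finset.sum_le_sum hterm
          _ = (A j).card * ((2:ℝ) ^ ((j:ℝ)/2))⁻¹ := by
              rw [Finset.sum_const, nsmul_eq_mul]
      have hcard : ((A j).card : ℝ) ≤ min (N:ℝ) (C * 2 ^ ((j:ℝ)/2)) := by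
        refine le_min ?_ ?_
        · have : A j ⊆ Finset.Icc 1 N := fun n₂ h =>
            Finset.mem_of_mem_filter _ (Finset.mem_of_mem_filter _ h)
          have := Finset.card_le_card this
          rw [Nat.card_Icc] at this
          exact_mod_cast this.trans (by omega)
        · have hX : (1:ℝ) ≤ x n₁ + 2 ^ ((j:ℝ)) := by
            have hx1 : 0 < x n₁ := hpos n₁ (Finset.mem_Icc.mp hn₁).1
            have h1 : (1:ℝ) ≤ 2 ^ ((j:ℝ)) := by
              rw [show (1:ℝ) = (2:ℝ) ^ (0:ℝ) by simp]
              exact Real.rpow_le_rpow_of_exponent_le one_le_two (by positivity)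
            linarith
          have hH : (1:ℝ) ≤ 2 ^ ((j:ℝ)) := by
            rw [show (1:ℝ) = (2:ℝ) ^ (0:ℝ) by simp]
            exact Real.rpow_le_rpow_of_exponent_le one_le_two (by positivity)
          have hmemI : ∀ n₂ ∈ A j, x n₂ ∈ Set.Icc (x n₁ + 2 ^ ((j:ℝ)))
              (x n₁ + 2 ^ ((j:ℝ)) + 2 ^ ((j:ℝ))) := by
            intro n₂ h
            obtain ⟨hlo, hhi⟩ := (Finset.mem_filter.mp h).2
            have h2 : (2:ℝ) ^ ((j:ℝ) + 1) = 2 ^ ((j:ℝ)) * 2 := by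
              rw [Real.rpow_add two_pos, Real.rpow_one]
            constructor <;> [linarith; nlinarith]
          have := hconc (x n₁ + 2 ^ ((j:ℝ))) (2 ^ ((j:ℝ))) hX hH (A j) hmemI
          refine this.trans_eq ?_
          congr 1
          rw [← Real.rpow_mul (by norm_num : (0:ℝ) ≤ 2)]
          congr 1; ring
        -- end hcard
      have hmin : min (N:ℝ) (C * 2 ^ ((j:ℝ)/2)) ≤ M * min (N:ℝ) (2 ^ ((j:ℝ)/2)) := by
        have heq : M * min (N:ℝ) (2 ^ ((j:ℝ)/2)) = min (M * N) (M * 2 ^ ((j:ℝ)/2)) :=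
          mul_min_of_nonneg _ _ (by linarith)
        rw [heq]
        refine le_min ?_ ?_
        · exact (min_le_left _ _).trans (le_mul_of_one_le_left (Nat.cast_nonneg N) hM1)
        · exact (min_le_right _ _).trans (mul_le_mul_of_nonneg_right hMC h2jh.le)
      calc (∑ n₂ ∈ A j, (x n₂ - x n₁) ^ (-(1:ℝ)/2))
          ≤ (A j).card * ((2:ℝ) ^ ((j:ℝ)/2))⁻¹ := hsum1
        _ ≤ (M * min (N:ℝ) (2 ^ ((j:ℝ)/2))) * ((2:ℝ) ^ ((j:ℝ)/2))⁻¹ :=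
            mul_le_mul_of_nonneg_right (hcard.trans hmin) (by positivity)
        _ = M * g j := by rw [hgdef]; field_simp
    calc (∑ j ∈ Finset.range J, ∑ n₂ ∈ A j, (x n₂ - x n₁) ^ (-(1:ℝ)/2))
        ≤ ∑ j ∈ Finset.range J, M * g j := Finset.sum_le_sum hstep
      _ = M * ∑ j ∈ Finset.range J, g j := by rw [Finset.mul_sum]
      _ ≤ M * ∑' j, g j := by
          apply mul_le_mul_of_nonneg_left _ (by linarith)
          exact Summable.sum_le_tsum _ (fun j _ => hgnn j) hgsum
  calc (∑ n₁ ∈ Finset.Icc 1 N, ∑ n₂ ∈ Finset.Icc 1 N,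
          if n₁ < n₂ ∧ 1 ≤ x n₂ - x n₁ then (x n₂ - x n₁) ^ (-(1:ℝ)/2) else 0)
      ≤ ∑ _n₁ ∈ Finset.Icc 1 N, M * ∑' j, g j := Finset.sum_le_sum key
    _ = (N:ℝ) * (M * ∑' j, g j) := by
        rw [Finset.sum_const, nsmul_eq_mul, Nat.card_Icc]
        norm_num
    _ = M * (N:ℝ) * ∑' j, g j := by ring
end

section
/- Let (x_n) be strictly increasing reals with x_{n+1} - x_n ≥ c > 0, and suppose E*_N := #{(n₁,n₂,n₃,n₄) ∈ [1,N]⁴ : |x_{n₁}-x_{n₂}+x_{n₃}-x_{n₄}| < 1} ≤ A. Then ∑_{1≤n₁<n₂≤N, x_{n₂}-x_{n₁}≥1} (x_{n₂}-x_{n₁})^{-1/2} ≪ (log(2N)) · A^{1/2}, with an absolute implied constant. -/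
/-!
Group the pairs `n₁ < n₂` by `k = ⌊x_{n₂} - x_{n₁}⌋ ≥ 1` and let `r(k)` be the size of the class.
Since `(x_{n₂} - x_{n₁})^{-1/2} ≤ k^{-1/2}`, Cauchy–Schwarz bounds the sum by
`(∑ r(k)²)^{1/2} (∑ 1/k)^{1/2}`, the sums running over the at most `N²` values of `k` that occur.
Two pairs in the same class have gaps differing by less than `1`, so `∑ r(k)² ≤ E*_N ≤ A`, while
`∑ 1/k` over `N²` distinct positive integers is at most the harmonic number `H_{N²} ≪ log(2N)`.
-/

open Finset

/-- Approximate additive energy: the number of quadruples `(n₁,n₂,n₃,n₄) ∈ [1,N]⁴`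
with `|x_{n₁} - x_{n₂} + x_{n₃} - x_{n₄}| < 1`. -/
noncomputable def Estar (x : ℕ → ℝ) (N : ℕ) : ℕ :=
  ((Finset.Icc 1 N ×ˢ Finset.Icc 1 N ×ˢ Finset.Icc 1 N ×ˢ Finset.Icc 1 N).filter
    (fun t => |x t.1 - x t.2.1 + x t.2.2.1 - x t.2.2.2| < 1)).card

theorem harmonic_mono : Monotone harmonic := fun _ _ h =>
  sum_le_sum_of_subset_of_nonneg (range_mono h) fun _ _ _ => by positivity

theorem sum_inv_le_harmonic_card (K : Finset ℕ) (hK : ∀ j ∈ K, 1 ≤ j) :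
    ∑ j ∈ K, (j : ℝ)⁻¹ ≤ harmonic #K := by
  induction K using Finset.induction_on_max with
  | empty => simp
  | insert a s ha ih =>
    have has : a ∉ s := fun h => (ha a h).false
    have hcard : #s + 1 ≤ a := by
      have hsub : s ⊆ Ico 1 a := fun j hj => mem_Ico.2 ⟨hK j (mem_insert_of_mem hj), ha j hj⟩
      have hs := card_le_card hsub
      rw [Nat.card_Ico] at hs
      have ha1 := hK a (mem_insert_self a s)
      omega
    rw [sum_insert has, card_insert_of_notMem has, harmonic_succ, add_comm]
    push_cast
    gcongr
    · exact ih fun j hj => hK j (mem_insert_of_mem hj)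
    · exact_mod_cast hcard

theorem sum_inv_le_one_add_log (K : Finset ℕ) (hK : ∀ j ∈ K, 1 ≤ j) {n : ℕ} (hn : #K ≤ n) :
    ∑ j ∈ K, (j : ℝ)⁻¹ ≤ 1 + Real.log n :=
  calc ∑ j ∈ K, (j : ℝ)⁻¹ ≤ harmonic #K := sum_inv_le_harmonic_card K hK
    _ ≤ harmonic n := by exact_mod_cast harmonic_mono hn
    _ ≤ 1 + Real.log n := harmonic_le_one_add_log n

theorem sum_sq_card_fiber_eq_card_filter {ι κ : Type*} [DecidableEq ι] [DecidableEq κ]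
    (s : Finset ι) (k : ι → κ) :
    ∑ j ∈ s.image k, #{i ∈ s | k i = j} ^ 2 = #{q ∈ s ×ˢ s | k q.1 = k q.2} := by
  rw [card_eq_sum_card_fiberwise (f := fun q => k q.1) (t := s.image k)]
  · refine sum_congr rfl fun j _ => ?_
    rw [sq, ← card_product]
    congr 1
    ext q
    simp only [mem_filter, mem_product]
    grind
  · intro q hq
    exact mem_image_of_mem k (mem_product.1 (mem_filter.1 hq).1).1

theorem sum_comp_le_sqrt_card_mul_sqrt {ι κ : Type*} [DecidableEq ι] [DecidableEq κ]
    (s : Finset ι) (k : ι → κ) (w : κ → ℝ) :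
    ∑ i ∈ s, w (k i) ≤
      √(#{q ∈ s ×ˢ s | k q.1 = k q.2} : ℝ) * √(∑ j ∈ s.image k, w j ^ 2) := by
  rw [sum_comp, ← sum_sq_card_fiber_eq_card_filter]
  push_cast
  simp only [nsmul_eq_mul]
  exact Real.sum_mul_le_sqrt_mul_sqrt _ _ _

theorem abs_sub_lt_one_of_natFloor_eq {a b : ℝ} (ha : 0 ≤ a) (hb : 0 ≤ b) (h : ⌊a⌋₊ = ⌊b⌋₊) :
    |a - b| < 1 := by
  apply Int.abs_sub_lt_one_of_floor_eq_floor
  rw [← Int.natCast_floor_eq_floor ha, ← Int.natCast_floor_eq_floor hb, h]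

/-- `(p, q) ↦ (p₂, p₁, q₁, q₂)` turns two pairs whose gaps have equal integer parts into a
quadruple counted by `Estar`, since the gaps then differ by less than `1`. -/
theorem card_floor_gap_eq_le_Estar (x : ℕ → ℝ) (N : ℕ) {P : Finset (ℕ × ℕ)}
    (hP : P ⊆ Icc 1 N ×ˢ Icc 1 N) (hgap : ∀ p ∈ P, 0 ≤ x p.2 - x p.1) :
    #{q ∈ P ×ˢ P | ⌊x q.1.2 - x q.1.1⌋₊ = ⌊x q.2.2 - x q.2.1⌋₊} ≤ Estar x N := by
  refine card_le_card_of_injOn (fun q => (q.1.2, q.1.1, q.2.1, q.2.2)) ?_ ?_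
  · intro q hq
    simp only [coe_filter, mem_product, Set.mem_ofPred_eq] at hq
    obtain ⟨⟨hp, hp'⟩, hfloor⟩ := hq
    have hpN := mem_product.1 (hP hp)
    have hpN' := mem_product.1 (hP hp')
    simp only [coe_filter, mem_product, Set.mem_ofPred_eq]
    refine ⟨⟨hpN.2, hpN.1, hpN'.1, hpN'.2⟩, ?_⟩
    have := abs_sub_lt_one_of_natFloor_eq (hgap _ hp) (hgap _ hp') hfloor
    convert this using 2
    ring
  · rintro ⟨⟨a, b⟩, c, d⟩ _ ⟨⟨a', b'⟩, c', d'⟩ _ h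
    simp only [Prod.mk.injEq] at h ⊢
    tauto

theorem one_add_log_sq_le {N : ℝ} (hN : 1 ≤ N) :
    1 + Real.log (N ^ 2) ≤ (3 * Real.log (2 * N)) ^ 2 := by
  have hlog2 := Real.log_two_gt_d9
  have hlogN := Real.log_nonneg hN
  rw [Real.log_pow, Real.log_mul two_ne_zero (by positivity)]
  push_cast
  nlinarith

theorem rpow_neg_half_le_inv_sqrt_natFloor {a : ℝ} (ha : 1 ≤ a) :
    a ^ (-(1 : ℝ) / 2) ≤ (√(⌊a⌋₊ : ℝ))⁻¹ := by
  have hfloor : (1 : ℝ) ≤ ⌊a⌋₊ := by exact_mod_cast Nat.le_floor (by exact_mod_cast ha)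
  rw [neg_div, Real.rpow_neg (by positivity), ← Real.sqrt_eq_rpow]
  gcongr
  exact Nat.floor_le (by positivity)

/-- If the approximate additive energy is at most `A`, then the weighted difference sum
`∑_{n₁<n₂≤N, x_{n₂}-x_{n₁}≥1} (x_{n₂}-x_{n₁})^{-1/2}` is `≪ log(2N) · A^{1/2}`, with an
absolute implied constant. -/
theorem stmt16 :
    ∃ C > (0 : ℝ), ∀ (x : ℕ → ℝ) (c : ℝ), 0 < c → StrictMono x →
      (∀ n, c ≤ x (n + 1) - x n) → ∀ (N : ℕ) (A : ℝ), 1 ≤ N →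
      (Estar x N : ℝ) ≤ A →
      (∑ n₁ ∈ Finset.Icc 1 N, ∑ n₂ ∈ Finset.Icc 1 N,
          if n₁ < n₂ ∧ 1 ≤ x n₂ - x n₁ then (x n₂ - x n₁) ^ (-(1 : ℝ) / 2) else 0)
        ≤ C * Real.log (2 * N) * Real.sqrt A := by
  refine ⟨3, by norm_num, fun x _ _ _ _ N A hN hE => ?_⟩
  set P := (Icc 1 N ×ˢ Icc 1 N).filter (fun p => p.1 < p.2 ∧ 1 ≤ x p.2 - x p.1)
  set k : ℕ × ℕ → ℕ := fun p => ⌊x p.2 - x p.1⌋₊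
  have hgap : ∀ p ∈ P, 1 ≤ x p.2 - x p.1 := fun p hp => (mem_filter.1 hp).2.2
  have hk : ∀ j ∈ P.image k, 1 ≤ j := by
    simp only [mem_image]
    rintro _ ⟨p, hp, rfl⟩
    exact Nat.le_floor (by exact_mod_cast hgap p hp)
  have hcard : #(P.image k) ≤ N ^ 2 :=
    card_image_le.trans <| (card_filter_le _ _).trans (by simp [sq])
  have henergy : (#{q ∈ P ×ˢ P | k q.1 = k q.2} : ℝ) ≤ A := by
    refine le_trans ?_ hE
    exact_mod_cast card_floor_gap_eq_le_Estar x N (filter_subset _ _)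
      fun p hp => zero_le_one.trans (hgap p hp)
  have hharmonic : ∑ j ∈ P.image k, (√(j : ℝ))⁻¹ ^ 2 ≤ (3 * Real.log (2 * N)) ^ 2 := by
    simp only [inv_pow, Nat.cast_nonneg, Real.sq_sqrt]
    refine (sum_inv_le_one_add_log _ hk hcard).trans ?_
    push_cast
    exact one_add_log_sq_le (by exact_mod_cast hN)
  calc _ = ∑ p ∈ P, (x p.2 - x p.1) ^ (-(1 : ℝ) / 2) := by rw [sum_filter, sum_product]
    _ ≤ ∑ p ∈ P, (√(k p : ℝ))⁻¹ :=
      sum_le_sum fun p hp => rpow_neg_half_le_inv_sqrt_natFloor (hgap p hp)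
    _ ≤ √(#{q ∈ P ×ˢ P | k q.1 = k q.2} : ℝ) * √(∑ j ∈ P.image k, (√(j : ℝ))⁻¹ ^ 2) :=
      sum_comp_le_sqrt_card_mul_sqrt P k fun j => (√(j : ℝ))⁻¹
    _ ≤ √A * (3 * Real.log (2 * N)) := by
      gcongr
      have hlog : 0 ≤ Real.log (2 * N) := Real.log_nonneg (by norm_cast; omega)
      exact Real.sqrt_le_iff.2 ⟨by positivity, hharmonic⟩
    _ = 3 * Real.log (2 * N) * √A := mul_comm _ _
end
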